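/- arXiv:2203.13078 — 10 statements merged into one kernel-verified Lean document; each statement's English description precedes it below -/
import Mathlib

section
/- Let f, g ∈ L¹([0,π];ℝ), let A, H ∈ ℝ and N ∈ ℕ. For n ∈ ℕ define b_n := (−1)^n + ∫_0^π f(t)cos(nt) dt and a_n := (−1)^n A + ∫_0^π g(t)cos(nt) dt. If a_n = −H·b_n for every n > N, then H = −A. -/
/-!
Along even `n > N` the relation `a n = -H * b n` reads
`A + H = -H * ∫ f cos(n·) - ∫ g cos(n·)`, and the right-hand side tends to `0` by the
Riemann–Lebesgue lemma.
-/

open MeasureTheory Filter Real Topology FourierTransform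

theorem Real.tendsto_integral_mul_cos_cocompact {F : ℝ → ℝ} (hF : Integrable F) :
    Tendsto (fun ξ : ℝ => ∫ t, F t * cos (ξ * t)) (cocompact ℝ) (𝓝 0) := by
  -- `∫ F t cos(ξ t)` is the real part of the Fourier transform of `F` at `ξ / (2π)`.
  have hRL := Real.tendsto_integral_exp_smul_cocompact (fun t => (F t : ℂ))
  have hscale : Tendsto (fun ξ : ℝ => ξ * (2 * π)⁻¹) (cocompact ℝ) (cocompact ℝ) :=
    tendsto_cocompact_mul_right₀ (by positivity)
  have hre := (Complex.continuous_re.tendsto 0).comp (hRL.comp hscale)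
  rw [Complex.zero_re] at hre
  refine hre.congr fun ξ => ?_
  have hint : Integrable (fun t : ℝ => 𝐞 (-(t * (ξ * (2 * π)⁻¹))) • (F t : ℂ)) :=
    (fourierIntegral_convergent_iff' (ContinuousLinearMap.mul ℝ ℝ) _).2 hF.ofReal
  rw [Function.comp_apply, Function.comp_apply, ← Complex.reCLM_apply,
    ← ContinuousLinearMap.integral_comp_comm _ hint]
  congr 1 with t
  rw [Complex.reCLM_apply, Circle.smul_def, Real.fourierChar_apply, smul_eq_mul,
    Complex.re_mul_ofReal, Complex.exp_ofReal_mul_I_re, mul_comm, ← cos_neg]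
  congr 2
  field_simp

theorem Real.tendsto_setIntegral_mul_cos_natCast {F : ℝ → ℝ} {s : Set ℝ} (hs : MeasurableSet s)
    (hF : IntegrableOn F s) :
    Tendsto (fun n : ℕ => ∫ t in s, F t * cos (n * t)) atTop (𝓝 0) := by
  have hRL := (tendsto_integral_mul_cos_cocompact ((integrable_indicator_iff hs).2 hF)).comp
    (tendsto_natCast_atTop_atTop.mono_right atTop_le_cocompact)
  refine hRL.congr fun n => ?_
  rw [Function.comp_apply, ← integral_indicator hs]
  congr 1 with t
  exact (Set.indicator_mul_left s F fun t => cos (n * t)).symm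

/-- Recovery of the right boundary constant from finite spectral data:
if `a_n = (−1)^n A + ∫ g cos(n·)` and `b_n = (−1)^n + ∫ f cos(n·)` satisfy
`a_n = −H b_n` for all `n > N`, then `H = −A`. -/
theorem stmt1 (f g : ℝ → ℝ)
    (hf : IntegrableOn f (Set.Icc (0 : ℝ) Real.pi))
    (hg : IntegrableOn g (Set.Icc (0 : ℝ) Real.pi))
    (A H : ℝ) (N : ℕ) (a b : ℕ → ℝ)
    (hb : ∀ n : ℕ, b n = (-1) ^ n + ∫ t in Set.Icc (0 : ℝ) Real.pi, f t * Real.cos (n * t))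
    (ha : ∀ n : ℕ, a n = (-1) ^ n * A + ∫ t in Set.Icc (0 : ℝ) Real.pi, g t * Real.cos (n * t))
    (hrel : ∀ n : ℕ, N < n → a n = -H * b n) :
    H = -A := by
  have hf₀ := tendsto_setIntegral_mul_cos_natCast measurableSet_Icc hf
  have hg₀ := tendsto_setIntegral_mul_cos_natCast measurableSet_Icc hg
  have hlim : Tendsto (fun m => a (2 * m) + H * b (2 * m)) atTop (𝓝 (A + H)) := by
    have h := (((hg₀.add (hf₀.const_mul H)).comp
      (tendsto_id.const_mul_atTop' two_pos)).const_add (A + H))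
    rw [mul_zero, add_zero, add_zero] at h
    refine h.congr fun m => ?_
    simp only [Function.comp_apply, id, ha, hb, pow_mul, neg_one_sq, one_pow]
    ring
  have hzero : (fun m => a (2 * m) + H * b (2 * m)) =ᶠ[atTop] fun _ => 0 :=
    eventually_atTop.2 ⟨N + 1, fun m hm => by
      simp only [hrel (2 * m) (by omega)]; ring⟩
  linarith [tendsto_nhds_unique hlim (tendsto_const_nhds.congr' hzero.symm)]
end

section
/- Let x ∈ (0,π] and let k ∈ L^∞([0,π]²;ℝ). Suppose the operator Id − κ_x is invertible on L²([0,x]) with ‖(Id−κ_x)^{−1}‖_{L²→L²} = R < ∞. Then for every p ∈ [2,∞] and every f ∈ L^p([0,x]), the unique L²-solution u of u − κ_x u = f belongs to L^p([0,x]) and satisfies ‖u‖_{L^p([0,x])} ≤ ‖f‖_{L^p([0,x])} + π^{1/2+1/p}‖k‖_{L^∞} R ‖f‖_{L²([0,x])}. In particular, Id − κ_x is boundedly invertible from L^p([0,x]) to L^p([0,x]). -/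
open MeasureTheory
open scoped ENNReal

/-!
Since `u = f + κ_x u`, it suffices to bound `κ_x u` in `Lᵖ`. A bounded kernel maps `L¹` into
`L^∞`, so `|κ_x u| ≤ ‖k‖_∞ ‖u‖₁ ≤ ‖k‖_∞ x^{1/2} ‖u‖₂` pointwise, hence
`‖κ_x u‖_p ≤ x^{1/2+1/p} ‖k‖_∞ ‖u‖₂`, and `‖u‖₂ ≤ R ‖f‖₂` by the `L²` invertibility.
-/

section KernelOperator

variable {α β : Type*} [MeasurableSpace β]

noncomputable def kernelOperator (μ : Measure β) (k : α → β → ℝ) (u : β → ℝ) (t : α) : ℝ :=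
  ∫ s, k t s * u s ∂μ

theorem enorm_kernelOperator_le (μ : Measure β) {k : α → β → ℝ} {C : ℝ}
    (hk : ∀ t s, |k t s| ≤ C) (u : β → ℝ) (t : α) :
    ‖kernelOperator μ k u t‖ₑ ≤ ENNReal.ofReal C * eLpNorm u 1 μ :=
  calc ‖kernelOperator μ k u t‖ₑ ≤ ∫⁻ s, ‖k t s * u s‖ₑ ∂μ :=
        enorm_integral_le_lintegral_enorm _
    _ ≤ ∫⁻ s, ENNReal.ofReal C * ‖u s‖ₑ ∂μ := by
        gcongr with s
        rw [enorm_mul, ← ofReal_norm, Real.norm_eq_abs]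
        gcongr
        exact hk t s
    _ = ENNReal.ofReal C * eLpNorm u 1 μ := by
        rw [lintegral_const_mul' _ _ ENNReal.ofReal_ne_top, eLpNorm_one_eq_lintegral_enorm]

theorem eLpNorm_kernelOperator_le [MeasurableSpace α] (ν : Measure α) (μ : Measure β)
    {k : α → β → ℝ} {C : ℝ} (hk : ∀ t s, |k t s| ≤ C) {u : β → ℝ}
    (hu : AEStronglyMeasurable u μ) (p : ℝ≥0∞) :
    eLpNorm (kernelOperator μ k u) p ν ≤
      μ Set.univ ^ (1 / 2 : ℝ) * ν Set.univ ^ (1 / p.toReal) * ENNReal.ofReal C *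
        eLpNorm u 2 μ := by
  have hL1 : eLpNorm u 1 μ ≤ eLpNorm u 2 μ * μ Set.univ ^ (1 / 2 : ℝ) := by
    convert eLpNorm_le_eLpNorm_mul_rpow_measure_univ one_le_two hu using 3
    norm_num
  calc eLpNorm (kernelOperator μ k u) p ν
      ≤ ENNReal.ofReal C * eLpNorm u 1 μ * ν Set.univ ^ (1 / p.toReal) := by
        rw [one_div]
        exact eLpNorm_le_of_ae_enorm_bound (ae_of_all _ (enorm_kernelOperator_le μ hk u))
    _ ≤ ENNReal.ofReal C * (eLpNorm u 2 μ * μ Set.univ ^ (1 / 2 : ℝ)) *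
          ν Set.univ ^ (1 / p.toReal) := by gcongr
    _ = _ := by ring

end KernelOperator

theorem stmt3_general (x : ℝ) (hx : x ∈ Set.Ioc (0 : ℝ) Real.pi)
    (k : ℝ → ℝ → ℝ)
    (Ck : ℝ) (hCk : 0 ≤ Ck) (hkbdd : ∀ t s : ℝ, |k t s| ≤ Ck)
    (R : ℝ)
    -- ... and injective, with inverse of operator norm at most `R`
    (hbound : ∀ v : ℝ → ℝ, MemLp v 2 (volume.restrict (Set.Icc (0 : ℝ) x)) →
      eLpNorm v 2 (volume.restrict (Set.Icc (0 : ℝ) x)) ≤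
        ENNReal.ofReal R *
          eLpNorm (fun t => v t - ∫ s in Set.Icc (0 : ℝ) x, k t s * v s) 2
            (volume.restrict (Set.Icc (0 : ℝ) x)))
    (p : ℝ≥0∞) (hp : 2 ≤ p)
    (f u : ℝ → ℝ)
    (hf : MemLp f p (volume.restrict (Set.Icc (0 : ℝ) x)))
    (hu : MemLp u 2 (volume.restrict (Set.Icc (0 : ℝ) x)))
    (heq : ∀ᵐ t ∂(volume.restrict (Set.Icc (0 : ℝ) x)),
      u t - ∫ s in Set.Icc (0 : ℝ) x, k t s * u s = f t) :
    MemLp u p (volume.restrict (Set.Icc (0 : ℝ) x)) ∧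
      eLpNorm u p (volume.restrict (Set.Icc (0 : ℝ) x)) ≤
        eLpNorm f p (volume.restrict (Set.Icc (0 : ℝ) x)) +
          ENNReal.ofReal (Real.pi ^ ((1 : ℝ) / 2 + 1 / p.toReal) * Ck * R) *
            eLpNorm f 2 (volume.restrict (Set.Icc (0 : ℝ) x)) := by
  set μ := volume.restrict (Set.Icc (0 : ℝ) x)
  set κu := kernelOperator μ k u
  have hμ : μ Set.univ = ENNReal.ofReal x := by simp [μ, Real.volume_Icc]
  have hu_eq : u =ᵐ[μ] f + κu := heq.mono fun t ht => by simp [κu, kernelOperator, ← ht]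
  have hκu_meas : AEStronglyMeasurable κu μ :=
    (hu.1.sub hf.1).congr (hu_eq.mono fun t ht => by simp [ht])
  have hκu := eLpNorm_kernelOperator_le μ μ hkbdd hu.1 p
  rw [hμ] at hκu
  have hκu_Lp : MemLp κu p μ := ⟨hκu_meas, hκu.trans_lt (by finiteness [hu.2])⟩
  have hconst : ENNReal.ofReal x ^ (1 / 2 : ℝ) * ENNReal.ofReal x ^ (1 / p.toReal) *
      ENNReal.ofReal Ck * ENNReal.ofReal R ≤
        ENNReal.ofReal (Real.pi ^ ((1 : ℝ) / 2 + 1 / p.toReal) * Ck * R) := by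
    rw [← ENNReal.rpow_add_of_nonneg _ _ (by norm_num) (by positivity),
      ENNReal.ofReal_mul (by positivity), ENNReal.ofReal_mul (by positivity),
      ← ENNReal.ofReal_rpow_of_nonneg Real.pi_pos.le (by positivity)]
    gcongr
    exact hx.2
  refine ⟨(hf.add hκu_Lp).ae_eq hu_eq.symm, ?_⟩
  calc eLpNorm u p μ = eLpNorm (f + κu) p μ := eLpNorm_congr_ae hu_eq
    _ ≤ eLpNorm f p μ + eLpNorm κu p μ := eLpNorm_add_le hf.1 hκu_meas (one_le_two.trans hp)
    _ ≤ eLpNorm f p μ + ENNReal.ofReal x ^ (1 / 2 : ℝ) * ENNReal.ofReal x ^ (1 / p.toReal) *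
          ENNReal.ofReal Ck * (ENNReal.ofReal R * eLpNorm f 2 μ) := by
        gcongr eLpNorm f p μ + ?_
        refine hκu.trans ?_
        gcongr
        exact (hbound u hu).trans_eq (by rw [eLpNorm_congr_ae heq])
    _ ≤ _ := by
        rw [← mul_assoc]
        gcongr

/-- Regularity of solutions of the Fredholm equation `u − κ_x u = f`:
if `Id − κ_x` is invertible on `L²([0,x])` with inverse of norm (at most) `R`
and the kernel `k` is bounded by `Ck`, then for `p ∈ [2,∞]` and `f ∈ Lᵖ([0,x])`
the `L²`-solution `u` lies in `Lᵖ` with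
`‖u‖_p ≤ ‖f‖_p + π^{1/2+1/p}‖k‖_∞ R ‖f‖_2`. -/
theorem stmt3 (x : ℝ) (hx : x ∈ Set.Ioc (0 : ℝ) Real.pi)
    (k : ℝ → ℝ → ℝ) (hkmeas : Measurable (Function.uncurry k))
    (Ck : ℝ) (hCk : 0 ≤ Ck) (hkbdd : ∀ t s : ℝ, |k t s| ≤ Ck)
    (R : ℝ) (hR : 0 ≤ R)
    -- `Id − κ_x` is surjective on `L²([0,x])` ...
    (hsolve : ∀ f : ℝ → ℝ, MemLp f 2 (volume.restrict (Set.Icc (0 : ℝ) x)) →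
      ∃ u : ℝ → ℝ, MemLp u 2 (volume.restrict (Set.Icc (0 : ℝ) x)) ∧
        ∀ᵐ t ∂(volume.restrict (Set.Icc (0 : ℝ) x)),
          u t - ∫ s in Set.Icc (0 : ℝ) x, k t s * u s = f t)
    -- ... and injective, with inverse of operator norm at most `R`
    (hbound : ∀ v : ℝ → ℝ, MemLp v 2 (volume.restrict (Set.Icc (0 : ℝ) x)) →
      eLpNorm v 2 (volume.restrict (Set.Icc (0 : ℝ) x)) ≤
        ENNReal.ofReal R *
          eLpNorm (fun t => v t - ∫ s in Set.Icc (0 : ℝ) x, k t s * v s) 2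
            (volume.restrict (Set.Icc (0 : ℝ) x)))
    (p : ℝ≥0∞) (hp : 2 ≤ p)
    (f u : ℝ → ℝ)
    (hf : MemLp f p (volume.restrict (Set.Icc (0 : ℝ) x)))
    (hu : MemLp u 2 (volume.restrict (Set.Icc (0 : ℝ) x)))
    (heq : ∀ᵐ t ∂(volume.restrict (Set.Icc (0 : ℝ) x)),
      u t - ∫ s in Set.Icc (0 : ℝ) x, k t s * u s = f t) :
    MemLp u p (volume.restrict (Set.Icc (0 : ℝ) x)) ∧
      eLpNorm u p (volume.restrict (Set.Icc (0 : ℝ) x)) ≤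
        eLpNorm f p (volume.restrict (Set.Icc (0 : ℝ) x)) +
          ENNReal.ofReal (Real.pi ^ ((1 : ℝ) / 2 + 1 / p.toReal) * Ck * R) *
            eLpNorm f 2 (volume.restrict (Set.Icc (0 : ℝ) x)) :=
  stmt3_general x hx k Ck hCk hkbdd R hbound p hp f u hf hu heq
end

section
/- Let x ∈ (0,π] and p ∈ [2,∞). Let k, k_N : [0,π]² → ℝ (N ∈ ℕ) be bounded measurable kernels and f, f_N ∈ L^p([0,x]). Suppose u, u_N ∈ L^p([0,x]) satisfy u − κ_x u = f and u_N − κ_{x,N} u_N = f_N for each N, that Id − κ_x is boundedly invertible on L^p([0,x]), that f_N → f in L^p([0,x]), that ‖k_N − k‖_{L^p([0,x];L^{p'}([0,x]))} → 0, and that sup_N ‖u_N‖_{L^p([0,x])} < ∞. Then u_N → u in L^p([0,x]) as N → ∞. -/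
/-!
Put `w = u_N − u`. Subtracting the two equations gives
`(Id − κ_x) w = (f_N − f) + (κ_{x,N} − κ_x) u_N`, so bounded invertibility yields
`‖w‖_p ≤ R (‖f_N − f‖_p + ‖(κ_{x,N} − κ_x) u_N‖_p)`. Hölder's inequality in `s` for each `t`,
followed by the `Lᵖ` norm in `t`, bounds the last term by
`‖k_N − k‖_{Lᵖ(L^{p'})} ‖u_N‖_p ≤ C_u ‖k_N − k‖_{Lᵖ(L^{p'})} → 0`.
-/

open MeasureTheory Filter
open scoped ENNReal

variable {α : Type*} [MeasurableSpace α] {μ : Measure α}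

/-- The mixed norm `‖K‖_{Lᵖ(L^q)}`. -/
noncomputable def kernelMixedNorm (μ : Measure α) (p q : ℝ) (K : α → α → ℝ) : ℝ :=
  (∫ t, (∫ s, |K t s| ^ q ∂μ) ^ (p / q) ∂μ) ^ (1 / p)

section BoundedKernel

variable {K : α → α → ℝ} {C : ℝ}

lemma integrable_kernel_mul (hK : Measurable (Function.uncurry K)) (hC : ∀ t s, |K t s| ≤ C)
    {v : α → ℝ} (hv : Integrable v μ) (t : α) : Integrable (fun s => K t s * v s) μ :=
  hv.bdd_mul hK.of_uncurry_left.aestronglyMeasurable (ae_of_all _ fun s => hC t s)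

lemma memLp_kernel_apply [IsFiniteMeasure μ] (hK : Measurable (Function.uncurry K))
    (hC : ∀ t s, |K t s| ≤ C) (r : ℝ≥0∞) (t : α) : MemLp (K t) r μ :=
  MemLp.of_bound hK.of_uncurry_left.aestronglyMeasurable C (ae_of_all _ fun s => hC t s)

lemma memLp_rpow_integral_abs_rpow [IsFiniteMeasure μ] {q : ℝ} (hq : 0 < q)
    (hK : Measurable (Function.uncurry K)) (hC : ∀ t s, |K t s| ≤ C) (r : ℝ≥0∞) :
    MemLp (fun t => (∫ s, |K t s| ^ q ∂μ) ^ (1 / q)) r μ := by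
  have hmeas : Measurable fun z : α × α => |K z.1 z.2| ^ q := hK.abs.pow_const q
  have hinner : ∀ t, ‖∫ s, |K t s| ^ q ∂μ‖ ≤ C ^ q * μ.real Set.univ := fun t =>
    norm_integral_le_of_norm_le_const <| ae_of_all _ fun s => by
      rw [Real.norm_eq_abs, abs_of_nonneg (by positivity)]
      exact Real.rpow_le_rpow (abs_nonneg _) (hC t s) hq.le
  refine MemLp.of_bound
    ((hmeas.stronglyMeasurable.integral_prod_right'.measurable.pow_const _).aestronglyMeasurable)
    ((C ^ q * μ.real Set.univ) ^ (1 / q)) (ae_of_all _ fun t => ?_)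
  have h0 : 0 ≤ ∫ s, |K t s| ^ q ∂μ := integral_nonneg fun s => by positivity
  rw [Real.norm_eq_abs, abs_of_nonneg (by positivity)]
  exact Real.rpow_le_rpow h0 ((Real.le_norm_self _).trans (hinner t)) (by positivity)

end BoundedKernel

lemma eLpNorm_rpow_integral_abs_rpow {K : α → α → ℝ} {p q : ℝ} (hp : 0 < p)
    (hK : MemLp (fun t => (∫ s, |K t s| ^ q ∂μ) ^ (1 / q)) (ENNReal.ofReal p) μ) :
    eLpNorm (fun t => (∫ s, |K t s| ^ q ∂μ) ^ (1 / q)) (ENNReal.ofReal p) μ =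
      ENNReal.ofReal (kernelMixedNorm μ p q K) := by
  rw [hK.eLpNorm_eq_integral_rpow_norm (by simpa using hp) ENNReal.ofReal_ne_top,
    ENNReal.toReal_ofReal hp.le, kernelMixedNorm, ← one_div]
  congr 2
  refine integral_congr_ae (ae_of_all _ fun t => ?_)
  have h0 : 0 ≤ ∫ s, |K t s| ^ q ∂μ := integral_nonneg fun s => by positivity
  simp only [Real.norm_eq_abs, abs_of_nonneg (Real.rpow_nonneg h0 _), ← Real.rpow_mul h0,
    one_div_mul_eq_div]

lemma eLpNorm_integral_kernel_mul_le [IsFiniteMeasure μ] {p q : ℝ} (hpq : p.HolderConjugate q)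
    {K : α → α → ℝ} {C : ℝ} (hK : Measurable (Function.uncurry K)) (hC : ∀ t s, |K t s| ≤ C)
    {v : α → ℝ} (hv : MemLp v (ENNReal.ofReal p) μ) :
    eLpNorm (fun t => ∫ s, K t s * v s ∂μ) (ENNReal.ofReal p) μ ≤
      eLpNorm v (ENNReal.ofReal p) μ * ENNReal.ofReal (kernelMixedNorm μ p q K) := by
  set B : ℝ := (∫ s, ‖v s‖ ^ p ∂μ) ^ (1 / p)
  have hrow := memLp_rpow_integral_abs_rpow (μ := μ) hpq.symm.pos hK hC (ENNReal.ofReal p)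
  have hholder : ∀ t, ‖∫ s, K t s * v s ∂μ‖ ≤
      B * ‖(∫ s, |K t s| ^ q ∂μ) ^ (1 / q)‖ := fun t => by
    have h0 : 0 ≤ ∫ s, |K t s| ^ q ∂μ := integral_nonneg fun s => by positivity
    calc ‖∫ s, K t s * v s ∂μ‖ ≤ ∫ s, ‖K t s‖ * ‖v s‖ ∂μ := by
          simpa only [norm_mul] using norm_integral_le_integral_norm (μ := μ) fun s => K t s * v s
      _ ≤ (∫ s, ‖K t s‖ ^ q ∂μ) ^ (1 / q) * B :=
          integral_mul_norm_le_Lp_mul_Lq hpq.symm (memLp_kernel_apply hK hC _ t) hv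
      _ = B * ‖(∫ s, |K t s| ^ q ∂μ) ^ (1 / q)‖ := by
          rw [Real.norm_of_nonneg (Real.rpow_nonneg h0 _), mul_comm]
          simp only [Real.norm_eq_abs]
  have hB : ENNReal.ofReal B = eLpNorm v (ENNReal.ofReal p) μ := by
    rw [hv.eLpNorm_eq_integral_rpow_norm (by simpa using hpq.pos) ENNReal.ofReal_ne_top,
      ENNReal.toReal_ofReal hpq.nonneg]
    simp only [B, one_div]
  calc _ ≤ ENNReal.ofReal B * eLpNorm (fun t => (∫ s, |K t s| ^ q ∂μ) ^ (1 / q))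
          (ENNReal.ofReal p) μ :=
        eLpNorm_le_mul_eLpNorm_of_ae_le_mul (ae_of_all _ hholder) _
    _ = _ := by rw [hB, eLpNorm_rpow_integral_abs_rpow hpq.pos hrow]

lemma sub_sub_integral_mul_sub_ae_eq {k l : α → α → ℝ} {u v f g : α → ℝ}
    (hku : ∀ t, Integrable (fun s => k t s * u s) μ)
    (hkv : ∀ t, Integrable (fun s => k t s * v s) μ)
    (hlv : ∀ t, Integrable (fun s => l t s * v s) μ)
    (hu : ∀ᵐ t ∂μ, u t - ∫ s, k t s * u s ∂μ = f t)
    (hv : ∀ᵐ t ∂μ, v t - ∫ s, l t s * v s ∂μ = g t) :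
    (fun t => (v t - u t) - ∫ s, k t s * (v s - u s) ∂μ) =ᵐ[μ]
      fun t => (g t - f t) + ∫ s, (l t s - k t s) * v s ∂μ := by
  filter_upwards [hu, hv] with t hut hvt
  simp only [mul_sub, sub_mul]
  rw [integral_sub (hkv t) (hku t), integral_sub (hlv t) (hkv t)]
  linarith

lemma eLpNorm_sub_le_of_integral_equation [IsFiniteMeasure μ] {p q : ℝ}
    (hpq : p.HolderConjugate q) {k l : α → α → ℝ} {Ck Cl R : ℝ}
    (hk : Measurable (Function.uncurry k)) (hl : Measurable (Function.uncurry l))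
    (hkC : ∀ t s, |k t s| ≤ Ck) (hlC : ∀ t s, |l t s| ≤ Cl) {u v f g : α → ℝ}
    (hf : AEStronglyMeasurable f μ) (hg : AEStronglyMeasurable g μ)
    (hu : MemLp u (ENNReal.ofReal p) μ) (hv : MemLp v (ENNReal.ofReal p) μ)
    (hequ : ∀ᵐ t ∂μ, u t - ∫ s, k t s * u s ∂μ = f t)
    (heqv : ∀ᵐ t ∂μ, v t - ∫ s, l t s * v s ∂μ = g t)
    (hR : ∀ w : α → ℝ, MemLp w (ENNReal.ofReal p) μ →
      eLpNorm w (ENNReal.ofReal p) μ ≤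
        ENNReal.ofReal R * eLpNorm (fun t => w t - ∫ s, k t s * w s ∂μ) (ENNReal.ofReal p) μ) :
    eLpNorm (fun t => v t - u t) (ENNReal.ofReal p) μ ≤
      ENNReal.ofReal R * (eLpNorm (fun t => g t - f t) (ENNReal.ofReal p) μ +
        eLpNorm v (ENNReal.ofReal p) μ *
          ENNReal.ofReal (kernelMixedNorm μ p q fun t s => l t s - k t s)) := by
  have hp1 : 1 ≤ ENNReal.ofReal p := by simpa using hpq.lt.le
  have hlk : Measurable (Function.uncurry fun t s => l t s - k t s) := hl.sub hk
  have hlkC : ∀ t s, |l t s - k t s| ≤ Cl + Ck := fun t s =>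
    (abs_sub _ _).trans (add_le_add (hlC t s) (hkC t s))
  have herr : AEStronglyMeasurable (fun t => ∫ s, (l t s - k t s) * v s ∂μ) μ :=
    (hlk.aestronglyMeasurable.mul
      (hv.1.comp_quasiMeasurePreserving Measure.quasiMeasurePreserving_snd)).integral_prod_right'
  have hdiff := sub_sub_integral_mul_sub_ae_eq (integrable_kernel_mul hk hkC (hu.integrable hp1))
    (integrable_kernel_mul hk hkC (hv.integrable hp1))
    (integrable_kernel_mul hl hlC (hv.integrable hp1)) hequ heqv
  calc _ ≤ ENNReal.ofReal R * eLpNorm (fun t => (v t - u t) - ∫ s, k t s * (v s - u s) ∂μ)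
        (ENNReal.ofReal p) μ := hR _ (hv.sub hu)
    _ = ENNReal.ofReal R * eLpNorm (fun t => (g t - f t) + ∫ s, (l t s - k t s) * v s ∂μ)
        (ENNReal.ofReal p) μ := by rw [eLpNorm_congr_ae hdiff]
    _ ≤ _ := by
      gcongr
      exact (eLpNorm_add_le (hg.sub hf) herr hp1).trans
        (add_le_add le_rfl (eLpNorm_integral_kernel_mul_le hpq hlk hlkC hv))

theorem stmt6_general (x : ℝ)
    (p p' : ℝ) (hpp' : Real.HolderConjugate p p')
    (k : ℝ → ℝ → ℝ) (kN : ℕ → ℝ → ℝ → ℝ)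
    (hkmeas : Measurable (Function.uncurry k))
    (hkNmeas : ∀ N, Measurable (Function.uncurry (kN N)))
    (Ck : ℝ) (hkbdd : ∀ t s : ℝ, |k t s| ≤ Ck)
    (CkN : ℕ → ℝ) (hkNbdd : ∀ N, ∀ t s : ℝ, |kN N t s| ≤ CkN N)
    (f u : ℝ → ℝ) (fN uN : ℕ → ℝ → ℝ)
    (hf : MemLp f (ENNReal.ofReal p) (volume.restrict (Set.Icc (0 : ℝ) x)))
    (hu : MemLp u (ENNReal.ofReal p) (volume.restrict (Set.Icc (0 : ℝ) x)))
    (hfN : ∀ N, MemLp (fN N) (ENNReal.ofReal p) (volume.restrict (Set.Icc (0 : ℝ) x)))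
    (huN : ∀ N, MemLp (uN N) (ENNReal.ofReal p) (volume.restrict (Set.Icc (0 : ℝ) x)))
    (hequ : ∀ᵐ t ∂(volume.restrict (Set.Icc (0 : ℝ) x)),
      u t - ∫ s in Set.Icc (0 : ℝ) x, k t s * u s = f t)
    (heqN : ∀ N, ∀ᵐ t ∂(volume.restrict (Set.Icc (0 : ℝ) x)),
      uN N t - ∫ s in Set.Icc (0 : ℝ) x, kN N t s * uN N s = fN N t)
    (R : ℝ)
    (hbound : ∀ v : ℝ → ℝ, MemLp v (ENNReal.ofReal p) (volume.restrict (Set.Icc (0 : ℝ) x)) →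
      eLpNorm v (ENNReal.ofReal p) (volume.restrict (Set.Icc (0 : ℝ) x)) ≤
        ENNReal.ofReal R *
          eLpNorm (fun t => v t - ∫ s in Set.Icc (0 : ℝ) x, k t s * v s) (ENNReal.ofReal p)
            (volume.restrict (Set.Icc (0 : ℝ) x)))
    -- `f_N → f` in `Lᵖ([0,x])`:
    (hfconv : Tendsto (fun N => eLpNorm (fun t => fN N t - f t) (ENNReal.ofReal p)
        (volume.restrict (Set.Icc (0 : ℝ) x))) atTop (nhds 0))
    -- `‖k_N − k‖_{Lᵖ([0,x];L^{p'}([0,x]))} → 0`: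
    (hkconv : Tendsto (fun N => (∫ t in Set.Icc (0 : ℝ) x,
        (∫ s in Set.Icc (0 : ℝ) x, |kN N t s - k t s| ^ p') ^ (p / p')) ^ (1 / p))
      atTop (nhds 0))
    -- `sup_N ‖u_N‖_p < ∞`:
    (Cu : ℝ) (huNbdd : ∀ N, eLpNorm (uN N) (ENNReal.ofReal p)
      (volume.restrict (Set.Icc (0 : ℝ) x)) ≤ ENNReal.ofReal Cu) :
    Tendsto (fun N => eLpNorm (fun t => uN N t - u t) (ENNReal.ofReal p)
      (volume.restrict (Set.Icc (0 : ℝ) x))) atTop (nhds 0) := by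
  have hmixed : Tendsto (fun N => kernelMixedNorm (volume.restrict (Set.Icc (0 : ℝ) x)) p p'
      fun t s => kN N t s - k t s) atTop (nhds 0) := hkconv
  have hlim := ENNReal.Tendsto.const_mul (hfconv.add (ENNReal.Tendsto.const_mul
    (ENNReal.tendsto_ofReal hmixed) (.inr (ENNReal.ofReal_ne_top (r := Cu)))))
      (.inr (ENNReal.ofReal_ne_top (r := R)))
  rw [ENNReal.ofReal_zero, mul_zero, add_zero, mul_zero] at hlim
  refine tendsto_of_tendsto_of_tendsto_of_le_of_le tendsto_const_nhds hlim (fun _ => zero_le)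
    fun N => ?_
  refine (eLpNorm_sub_le_of_integral_equation hpp' hkmeas (hkNmeas N) hkbdd (hkNbdd N) hf.1
    (hfN N).1 hu (huN N) hequ (heqN N) hbound).trans ?_
  gcongr
  exact huNbdd N

/-- Convergence of solutions of Fredholm equations: if `u − κ_x u = f`,
`u_N − κ_{x,N} u_N = f_N`, `Id − κ_x` is boundedly invertible on `Lᵖ([0,x])`,
`f_N → f` in `Lᵖ`, `‖k_N − k‖_{Lᵖ(L^{p'})} → 0` and `sup_N ‖u_N‖_p < ∞`,
then `u_N → u` in `Lᵖ([0,x])`. -/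
theorem stmt6 (x : ℝ) (hx : x ∈ Set.Ioc (0 : ℝ) Real.pi)
    (p p' : ℝ) (hp2 : 2 ≤ p) (hpp' : Real.HolderConjugate p p')
    (k : ℝ → ℝ → ℝ) (kN : ℕ → ℝ → ℝ → ℝ)
    (hkmeas : Measurable (Function.uncurry k))
    (hkNmeas : ∀ N, Measurable (Function.uncurry (kN N)))
    (Ck : ℝ) (hkbdd : ∀ t s : ℝ, |k t s| ≤ Ck)
    (CkN : ℕ → ℝ) (hkNbdd : ∀ N, ∀ t s : ℝ, |kN N t s| ≤ CkN N)
    (f u : ℝ → ℝ) (fN uN : ℕ → ℝ → ℝ)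
    (hf : MemLp f (ENNReal.ofReal p) (volume.restrict (Set.Icc (0 : ℝ) x)))
    (hu : MemLp u (ENNReal.ofReal p) (volume.restrict (Set.Icc (0 : ℝ) x)))
    (hfN : ∀ N, MemLp (fN N) (ENNReal.ofReal p) (volume.restrict (Set.Icc (0 : ℝ) x)))
    (huN : ∀ N, MemLp (uN N) (ENNReal.ofReal p) (volume.restrict (Set.Icc (0 : ℝ) x)))
    (hequ : ∀ᵐ t ∂(volume.restrict (Set.Icc (0 : ℝ) x)),
      u t - ∫ s in Set.Icc (0 : ℝ) x, k t s * u s = f t)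
    (heqN : ∀ N, ∀ᵐ t ∂(volume.restrict (Set.Icc (0 : ℝ) x)),
      uN N t - ∫ s in Set.Icc (0 : ℝ) x, kN N t s * uN N s = fN N t)
    -- `Id − κ_x` is boundedly invertible on `Lᵖ([0,x])`:
    (hsolve : ∀ g : ℝ → ℝ, MemLp g (ENNReal.ofReal p) (volume.restrict (Set.Icc (0 : ℝ) x)) →
      ∃ v : ℝ → ℝ, MemLp v (ENNReal.ofReal p) (volume.restrict (Set.Icc (0 : ℝ) x)) ∧
        ∀ᵐ t ∂(volume.restrict (Set.Icc (0 : ℝ) x)),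
          v t - ∫ s in Set.Icc (0 : ℝ) x, k t s * v s = g t)
    (R : ℝ)
    (hbound : ∀ v : ℝ → ℝ, MemLp v (ENNReal.ofReal p) (volume.restrict (Set.Icc (0 : ℝ) x)) →
      eLpNorm v (ENNReal.ofReal p) (volume.restrict (Set.Icc (0 : ℝ) x)) ≤
        ENNReal.ofReal R *
          eLpNorm (fun t => v t - ∫ s in Set.Icc (0 : ℝ) x, k t s * v s) (ENNReal.ofReal p)
            (volume.restrict (Set.Icc (0 : ℝ) x)))
    -- `f_N → f` in `Lᵖ([0,x])`:
    (hfconv : Tendsto (fun N => eLpNorm (fun t => fN N t - f t) (ENNReal.ofReal p)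
        (volume.restrict (Set.Icc (0 : ℝ) x))) atTop (nhds 0))
    -- `‖k_N − k‖_{Lᵖ([0,x];L^{p'}([0,x]))} → 0`:
    (hkconv : Tendsto (fun N => (∫ t in Set.Icc (0 : ℝ) x,
        (∫ s in Set.Icc (0 : ℝ) x, |kN N t s - k t s| ^ p') ^ (p / p')) ^ (1 / p))
      atTop (nhds 0))
    -- `sup_N ‖u_N‖_p < ∞`:
    (Cu : ℝ) (huNbdd : ∀ N, eLpNorm (uN N) (ENNReal.ofReal p)
      (volume.restrict (Set.Icc (0 : ℝ) x)) ≤ ENNReal.ofReal Cu) :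
    Tendsto (fun N => eLpNorm (fun t => uN N t - u t) (ENNReal.ofReal p)
      (volume.restrict (Set.Icc (0 : ℝ) x))) atTop (nhds 0) :=
  stmt6_general x p p' hpp' k kN hkmeas hkNmeas Ck hkbdd CkN hkNbdd f u fN uN hf hu hfN huN hequ
    heqN R hbound hfconv hkconv Cu huNbdd
end

section
/- Let F : [0,π]² → ℝ be bounded and measurable, and for x ∈ [0,π] let κ_x be the integral operator on L²([0,x]) with kernel k(t,s) := −F(s,t). Assume each Id − κ_x is invertible on L²([0,x]) and R := sup_{x∈[0,π]} ‖(Id−κ_x)^{−1}‖_{L²→L²} < ∞. Suppose that for each x ∈ [0,π] the function K(x,·) ∈ L²([0,x]) satisfies the Gel'fand–Levitan equation K(x,y) + F(x,y) + ∫_0^x K(x,t)F(t,y) dt = 0 for y ∈ [0,x]. Then for all 0 ≤ y ≤ x ≤ π one has |K(x,y)| ≤ ‖F‖_{L^∞} ( 1 + π^{3/2} ‖F‖_{L^∞} R ). -/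
open MeasureTheory
open scoped ENNReal

/-!
The Gel'fand–Levitan equation says `(Id − κ_x) K(x,·) = −F(x,·)` on `[0,x]`, so the resolvent
bound gives `‖K(x,·)‖₂ ≤ R ‖F‖_∞ √x`, and Cauchy–Schwarz on `[0,x]` gives
`‖K(x,·)‖₁ ≤ R ‖F‖_∞ x`. Reading the equation pointwise then yields
`|K(x,y)| ≤ |F(x,y)| + ‖F‖_∞ ‖K(x,·)‖₁ ≤ ‖F‖_∞ (1 + π ‖F‖_∞ R)`, and `π ≤ π^{3/2}`.
-/

open Set Real

section Integrals

variable {α : Type*} [MeasurableSpace α] {μ : Measure α}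

theorem abs_integral_mul_le_of_ae_abs_le {k g : α → ℝ} (hk : Integrable k μ) {C : ℝ}
    (hg : ∀ᵐ a ∂μ, |g a| ≤ C) : |∫ a, k a * g a ∂μ| ≤ C * ∫ a, |k a| ∂μ :=
  calc |∫ a, k a * g a ∂μ| ≤ ∫ a, |k a * g a| ∂μ := abs_integral_le_integral_abs
    _ ≤ ∫ a, C * |k a| ∂μ := by
        refine integral_mono_of_nonneg (.of_forall fun a => abs_nonneg _)
          (hk.abs.const_mul C) (hg.mono fun a ha => ?_)
        show |k a * g a| ≤ C * |k a|
        rw [abs_mul, mul_comm]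
        exact mul_le_mul_of_nonneg_right ha (abs_nonneg _)
    _ = C * ∫ a, |k a| ∂μ := integral_const_mul _ _

variable [IsFiniteMeasure μ]

theorem measure_univ_rpow_inv_two :
    μ univ ^ (2 : ℝ)⁻¹ = ENNReal.ofReal √(μ.real univ) := by
  rw [← ofReal_measureReal, ENNReal.ofReal_rpow_of_nonneg measureReal_nonneg (by norm_num),
    sqrt_eq_rpow, one_div]

theorem eLpNorm_two_le_of_ae_abs_le {f : α → ℝ} {C : ℝ} (hC : 0 ≤ C)
    (hf : ∀ᵐ a ∂μ, |f a| ≤ C) :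
    eLpNorm f 2 μ ≤ ENNReal.ofReal (C * √(μ.real univ)) := by
  calc eLpNorm f 2 μ ≤ μ univ ^ (2 : ℝ≥0∞).toReal⁻¹ * ENNReal.ofReal C :=
        eLpNorm_le_of_ae_bound hf
    _ = ENNReal.ofReal (C * √(μ.real univ)) := by
        rw [ENNReal.toReal_ofNat, measure_univ_rpow_inv_two, mul_comm, ENNReal.ofReal_mul hC]

theorem integral_abs_le_of_eLpNorm_two_le {f : α → ℝ} (hf : AEStronglyMeasurable f μ)
    {C : ℝ} (hC : 0 ≤ C) (h : eLpNorm f 2 μ ≤ ENNReal.ofReal C) :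
    ∫ a, |f a| ∂μ ≤ C * √(μ.real univ) := by
  have hL1 : eLpNorm f 1 μ ≤ ENNReal.ofReal (C * √(μ.real univ)) :=
    calc eLpNorm f 1 μ
        ≤ eLpNorm f 2 μ * μ univ ^ (1 / (1 : ℝ≥0∞).toReal - 1 / (2 : ℝ≥0∞).toReal) :=
          eLpNorm_le_eLpNorm_mul_rpow_measure_univ (by norm_num) hf
      _ = eLpNorm f 2 μ * μ univ ^ (2 : ℝ)⁻¹ := by norm_num
      _ ≤ ENNReal.ofReal (C * √(μ.real univ)) := by
          rw [measure_univ_rpow_inv_two, ENNReal.ofReal_mul hC]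
          gcongr
  have hL1_eq : ∫ a, |f a| ∂μ = (eLpNorm f 1 μ).toReal := by
    simp only [eLpNorm_one_eq_lintegral_enorm, ← integral_norm_eq_lintegral_enorm hf,
      Real.norm_eq_abs]
  exact hL1_eq ▸ ENNReal.toReal_le_of_le_ofReal (by positivity) hL1

end Integrals

section GelfandLevitan

variable {F : ℝ → ℝ → ℝ} {k : ℝ → ℝ} {x : ℝ}

theorem sub_integral_neg_mul_eq_neg_of_add_add_integral_eq_zero {s : Set ℝ} {y : ℝ}
    (h : k y + F x y + ∫ t in s, k t * F t y = 0) :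
    k y - ∫ t in s, (-F t y) * k t = -F x y := by
  have hneg : ∫ t in s, (-F t y) * k t = -∫ t in s, k t * F t y := by
    rw [← integral_neg]
    exact integral_congr_ae (.of_forall fun t => by ring)
  linarith

theorem integral_abs_le_of_gelfandLevitan {R C : ℝ} (hx : 0 ≤ x) (hR : 0 ≤ R) (hC : 0 ≤ C)
    (hF : ∀ t ∈ Icc 0 x, |F x t| ≤ C) (hk : MemLp k 2 (volume.restrict (Icc 0 x)))
    (hres : eLpNorm k 2 (volume.restrict (Icc 0 x)) ≤ ENNReal.ofReal R *
      eLpNorm (fun t => k t - ∫ s in Icc 0 x, (-F s t) * k s) 2 (volume.restrict (Icc 0 x)))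
    (hGL : ∀ y ∈ Icc 0 x, k y + F x y + ∫ t in Icc 0 x, k t * F t y = 0) :
    ∫ t in Icc 0 x, |k t| ≤ R * C * x := by
  set μ := volume.restrict (Icc 0 x)
  have hμ : μ.real univ = x := by simp [μ, hx]
  have hresolvent : (fun t => k t - ∫ s in Icc 0 x, (-F s t) * k s) =ᵐ[μ] fun t => -F x t :=
    ae_restrict_of_forall_mem measurableSet_Icc fun t ht =>
      sub_integral_neg_mul_eq_neg_of_add_add_integral_eq_zero (hGL t ht)
  have hL2 : eLpNorm k 2 μ ≤ ENNReal.ofReal (R * (C * √x)) :=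
    calc eLpNorm k 2 μ
        ≤ ENNReal.ofReal R * eLpNorm (fun t => -F x t) 2 μ := by
          rwa [← eLpNorm_congr_ae hresolvent]
      _ ≤ ENNReal.ofReal R * ENNReal.ofReal (C * √x) := by
          have h := eLpNorm_two_le_of_ae_abs_le (μ := μ) (f := fun t => -F x t) hC
            (ae_restrict_of_forall_mem measurableSet_Icc fun t ht =>
              (abs_neg (F x t)).trans_le (hF t ht))
          rw [hμ] at h
          gcongr
      _ = ENNReal.ofReal (R * (C * √x)) := (ENNReal.ofReal_mul hR).symm
  have h := integral_abs_le_of_eLpNorm_two_le hk.1 (by positivity) hL2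
  rwa [hμ, mul_assoc, mul_assoc, Real.mul_self_sqrt hx, ← mul_assoc] at h

theorem abs_le_of_gelfandLevitan {y C : ℝ} (hx : 0 ≤ x)
    (hk : Integrable k (volume.restrict (Icc 0 x))) (hF : ∀ t ∈ Icc 0 x, |F t y| ≤ C)
    (hGL : k y + F x y + ∫ t in Icc 0 x, k t * F t y = 0) :
    |k y| ≤ C + C * ∫ t in Icc 0 x, |k t| :=
  calc |k y| = |-F x y - ∫ t in Icc 0 x, k t * F t y| := by
        congr 1; linarith
    _ ≤ |F x y| + |∫ t in Icc 0 x, k t * F t y| := (abs_sub _ _).trans_eq (by rw [abs_neg])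
    _ ≤ C + C * ∫ t in Icc 0 x, |k t| :=
        add_le_add (hF x ⟨hx, le_rfl⟩)
          (abs_integral_mul_le_of_ae_abs_le hk (ae_restrict_of_forall_mem measurableSet_Icc hF))

end GelfandLevitan

theorem stmt8_general (F : ℝ → ℝ → ℝ)
    (CF : ℝ)
    (hFbdd : ∀ x ∈ Set.Icc (0 : ℝ) Real.pi, ∀ y ∈ Set.Icc (0 : ℝ) Real.pi, |F x y| ≤ CF)
    (R : ℝ) (hR : 0 ≤ R)
    -- ... with `sup_{x∈[0,π]} ‖(Id−κ_x)⁻¹‖_{L²→L²} ≤ R`: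
    (hbound : ∀ x ∈ Set.Icc (0 : ℝ) Real.pi, ∀ v : ℝ → ℝ,
      MemLp v 2 (volume.restrict (Set.Icc (0 : ℝ) x)) →
      eLpNorm v 2 (volume.restrict (Set.Icc (0 : ℝ) x)) ≤
        ENNReal.ofReal R *
          eLpNorm (fun t => v t - ∫ s in Set.Icc (0 : ℝ) x, (-F s t) * v s) 2
            (volume.restrict (Set.Icc (0 : ℝ) x)))
    (K : ℝ → ℝ → ℝ)
    (hKL2 : ∀ x ∈ Set.Icc (0 : ℝ) Real.pi,
      MemLp (K x) 2 (volume.restrict (Set.Icc (0 : ℝ) x)))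
    (hKeq : ∀ x ∈ Set.Icc (0 : ℝ) Real.pi, ∀ y ∈ Set.Icc (0 : ℝ) x,
      K x y + F x y + ∫ t in Set.Icc (0 : ℝ) x, K x t * F t y = 0) :
    ∀ x y : ℝ, 0 ≤ y → y ≤ x → x ≤ Real.pi →
      |K x y| ≤ CF * (1 + Real.pi ^ ((3 : ℝ) / 2) * CF * R) := by
  have hCF : 0 ≤ CF :=
    (abs_nonneg _).trans (hFbdd 0 ⟨le_rfl, pi_pos.le⟩ 0 ⟨le_rfl, pi_pos.le⟩)
  intro x y hy0 hyx hxpi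
  have hx : x ∈ Icc 0 π := ⟨hy0.trans hyx, hxpi⟩
  have hL1 : ∫ t in Icc 0 x, |K x t| ≤ R * CF * x :=
    integral_abs_le_of_gelfandLevitan hx.1 hR hCF
      (fun t ht => hFbdd x hx t ⟨ht.1, ht.2.trans hxpi⟩) (hKL2 x hx)
      (hbound x hx _ (hKL2 x hx)) (hKeq x hx)
  have hpoint : |K x y| ≤ CF + CF * ∫ t in Icc 0 x, |K x t| :=
    abs_le_of_gelfandLevitan hx.1 ((hKL2 x hx).integrable one_le_two)
      (fun t ht => hFbdd t ⟨ht.1, ht.2.trans hxpi⟩ y ⟨hy0, hyx.trans hxpi⟩)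
      (hKeq x hx y ⟨hy0, hyx⟩)
  have hpi : π ≤ π ^ ((3 : ℝ) / 2) := by
    simpa using rpow_le_rpow_of_exponent_le (by linarith [pi_gt_three] : (1 : ℝ) ≤ π)
      (by norm_num : (1 : ℝ) ≤ 3 / 2)
  calc |K x y| ≤ CF + CF * (R * CF * x) := hpoint.trans (by gcongr)
    _ ≤ CF + CF * (R * CF * π ^ ((3 : ℝ) / 2)) := by gcongr; exact hxpi.trans hpi
    _ = CF * (1 + π ^ ((3 : ℝ) / 2) * CF * R) := by ring

/-- Uniform bound on the Gel'fand–Levitan kernel: if `|F| ≤ CF` on `[0,π]²`,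
each `Id − κ_x` (kernel `k(t,s) = −F(s,t)`) is invertible on `L²([0,x])` with
`sup_x ‖(Id−κ_x)⁻¹‖ ≤ R`, and `K(x,·)` solves the Gel'fand–Levitan equation,
then `|K(x,y)| ≤ CF (1 + π^{3/2} CF R)` for all `0 ≤ y ≤ x ≤ π`. -/
theorem stmt8 (F : ℝ → ℝ → ℝ)
    (hFmeas : Measurable (Function.uncurry F))
    (CF : ℝ) (hCF : 0 ≤ CF)
    (hFbdd : ∀ x ∈ Set.Icc (0 : ℝ) Real.pi, ∀ y ∈ Set.Icc (0 : ℝ) Real.pi, |F x y| ≤ CF)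
    (R : ℝ) (hR : 0 ≤ R)
    -- each `Id − κ_x` is invertible on `L²([0,x])` ...
    (hsolve : ∀ x ∈ Set.Icc (0 : ℝ) Real.pi, ∀ f : ℝ → ℝ,
      MemLp f 2 (volume.restrict (Set.Icc (0 : ℝ) x)) →
      ∃ u : ℝ → ℝ, MemLp u 2 (volume.restrict (Set.Icc (0 : ℝ) x)) ∧
        ∀ᵐ t ∂(volume.restrict (Set.Icc (0 : ℝ) x)),
          u t - ∫ s in Set.Icc (0 : ℝ) x, (-F s t) * u s = f t)
    -- ... with `sup_{x∈[0,π]} ‖(Id−κ_x)⁻¹‖_{L²→L²} ≤ R`: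
    (hbound : ∀ x ∈ Set.Icc (0 : ℝ) Real.pi, ∀ v : ℝ → ℝ,
      MemLp v 2 (volume.restrict (Set.Icc (0 : ℝ) x)) →
      eLpNorm v 2 (volume.restrict (Set.Icc (0 : ℝ) x)) ≤
        ENNReal.ofReal R *
          eLpNorm (fun t => v t - ∫ s in Set.Icc (0 : ℝ) x, (-F s t) * v s) 2
            (volume.restrict (Set.Icc (0 : ℝ) x)))
    (K : ℝ → ℝ → ℝ)
    (hKL2 : ∀ x ∈ Set.Icc (0 : ℝ) Real.pi,
      MemLp (K x) 2 (volume.restrict (Set.Icc (0 : ℝ) x)))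
    (hKeq : ∀ x ∈ Set.Icc (0 : ℝ) Real.pi, ∀ y ∈ Set.Icc (0 : ℝ) x,
      K x y + F x y + ∫ t in Set.Icc (0 : ℝ) x, K x t * F t y = 0) :
    ∀ x y : ℝ, 0 ≤ y → y ≤ x → x ≤ Real.pi →
      |K x y| ≤ CF * (1 + Real.pi ^ ((3 : ℝ) / 2) * CF * R) :=
  stmt8_general F CF hFbdd R hR hbound K hKL2 hKeq
end

section
/- Let H be a separable Hilbert space with orthonormal basis (f_n)_{n∈ℕ₀}, let (g_n)_{n∈ℕ₀} ⊂ H, and let T : H → H be a bounded linear operator with T f_n = g_n for all n. Let P_J denote the orthogonal projection onto span{f_0,…,f_J}. Let η, μ > 0 and let J ∈ ℕ satisfy J ≥ 2μ and J ≥ 3. Suppose that |⟨g_j, f_k⟩| ≤ η / (k² − (j + μ/(j+1))²) for all integers j, k with 0 ≤ j ≤ J < k. Then ‖(Id − P_J) T P_J‖ ≤ 4η · log(J)/J. -/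
/-!
The block `(Id − P_J) T P_J` has matrix `a j k = ⟪g_j, f_k⟫` on `j ≤ J < k` and zero elsewhere.
Since `μ / (j + 1) ≤ (J + 1 − j) / 2`, the decay hypothesis gives `|a j k| ≤ 2η / ((k − j) k)`.
Row sums of this kernel are at most `H_{J+1} / (J + 1) ≤ H_J / J` (compare with `k = J + 1`), and
column sums are at most `H_J / J` by the telescoping `J / ((k − J) k) = 1 / (k − J) − 1 / k`.
The Schur test then gives `‖(Id − P_J) T P_J‖ ≤ 2η H_J / J`, and `H_J ≤ 1 + log J ≤ 2 log J`
for `J ≥ 3`.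
-/

open scoped InnerProductSpace
open Finset

lemma harmonic_cast_succ (n : ℕ) : (harmonic (n + 1) : ℝ) = harmonic n + 1 / ((n : ℝ) + 1) := by
  rw [harmonic_succ]; push_cast; ring

lemma harmonic_cast_eq_sum (n : ℕ) : (harmonic n : ℝ) = ∑ i ∈ range n, 1 / ((i : ℝ) + 1) := by
  simp [harmonic]

lemma harmonic_mono : Monotone harmonic := fun m n hmn =>
  sum_le_sum_of_subset_of_nonneg (range_subset_range.2 hmn) fun _ _ _ => by positivity

lemma harmonic_succ_div_le {n : ℕ} (hn : 0 < n) :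
    (harmonic (n + 1) : ℝ) / (n + 1) ≤ harmonic n / n := by
  have h1 : (1 : ℝ) ≤ harmonic n := by
    exact_mod_cast (harmonic_mono (Nat.one_le_iff_ne_zero.2 hn.ne')).trans_eq' (by simp)
  have hn' : (0 : ℝ) < n := by exact_mod_cast hn
  rw [harmonic_cast_succ, div_le_div_iff₀ (by positivity) hn']
  field_simp
  nlinarith

lemma harmonic_le_two_mul_log {n : ℕ} (hn : 3 ≤ n) : (harmonic n : ℝ) ≤ 2 * Real.log n := by
  have hlog : 1 ≤ Real.log n := by
    rw [Real.le_log_iff_exp_le (by positivity)]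
    have : (3 : ℝ) ≤ n := by exact_mod_cast hn
    linarith [Real.exp_one_lt_d9]
  linarith [harmonic_le_one_add_log n]

lemma div_sq_sub_sq_le {η μ j J k : ℝ} (hη : 0 ≤ η) (hμ : 0 ≤ μ) (hμJ : 2 * μ ≤ J) (hj : 0 ≤ j)
    (hjJ : j ≤ J) (hJk : J + 1 ≤ k) :
    η / (k ^ 2 - (j + μ / (j + 1)) ^ 2) ≤ 2 * η / ((k - j) * k) := by
  set x := μ / (j + 1)
  have hx : x ≤ (J + 1 - j) / 2 := by
    rw [div_le_div_iff₀ (by linarith) two_pos]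
    nlinarith
  -- so `j + x ≤ (j + k) / 2`, whence `k ^ 2 - (j + x) ^ 2 ≥ (k - j) * k / 2`
  have hx0 : 0 ≤ x := by positivity
  have hpos : 0 < (k - j) * k := by nlinarith
  calc η / (k ^ 2 - (j + x) ^ 2) ≤ η / ((k - j) * k / 2) :=
        div_le_div_of_nonneg_left hη (by positivity) (by nlinarith)
    _ = 2 * η / ((k - j) * k) := by field_simp

lemma mul_sum_range_one_div_mul_add (J M : ℕ) :
    (J : ℝ) * ∑ m ∈ range M, 1 / (((m : ℝ) + 1) * (J + m + 1))
      = harmonic J + harmonic M - harmonic (J + M) := by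
  induction M with
  | zero => simp
  | succ M ih =>
    rw [sum_range_succ, mul_add, ih, ← add_assoc, harmonic_cast_succ, harmonic_cast_succ]
    push_cast
    field_simp
    ring

lemma sum_one_div_sub_mul_le {J : ℕ} (hJ : 0 < J) {t : Finset ℕ} (ht : ∀ k ∈ t, J < k) :
    ∑ k ∈ t, 1 / (((k : ℝ) - J) * k) ≤ harmonic J / J := by
  have hJ' : (0 : ℝ) < J := by exact_mod_cast hJ
  set M := t.sup id
  have hsub : t ⊆ (range M).image (J + 1 + ·) := fun k hk => by
    have hkM : k ≤ M := le_sup (f := id) hk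
    have hJk := ht k hk
    exact mem_image.2 ⟨k - (J + 1), mem_range.2 (by omega), by omega⟩
  calc ∑ k ∈ t, 1 / (((k : ℝ) - J) * k)
      ≤ ∑ k ∈ (range M).image (J + 1 + ·), 1 / (((k : ℝ) - J) * k) :=
        sum_le_sum_of_subset_of_nonneg hsub fun k hk _ => by
          obtain ⟨m, -, rfl⟩ := mem_image.1 hk; push_cast; ring_nf; positivity
    _ = ∑ m ∈ range M, 1 / (((m : ℝ) + 1) * (J + m + 1)) := by
        rw [sum_image fun _ _ _ _ h => by simpa using h]
        refine sum_congr rfl fun m _ => ?_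
        push_cast; ring_nf
    _ ≤ harmonic J / J := by
        rw [le_div_iff₀ hJ', mul_comm, mul_sum_range_one_div_mul_add]
        have : (harmonic M : ℝ) ≤ harmonic (J + M) := by exact_mod_cast harmonic_mono (by omega)
        linarith

lemma sum_range_one_div_sub_mul_le {J k : ℕ} (hk : J < k) :
    ∑ j ∈ range (J + 1), 1 / (((k : ℝ) - j) * k) ≤ harmonic (J + 1) / (J + 1) := by
  have hk' : (J : ℝ) + 1 ≤ k := by exact_mod_cast hk
  calc ∑ j ∈ range (J + 1), 1 / (((k : ℝ) - j) * k)
      ≤ ∑ j ∈ range (J + 1), 1 / (((J : ℝ) + 1 - j) * (J + 1)) := by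
        refine sum_le_sum fun j hj => ?_
        have hj : (j : ℝ) ≤ J := by exact_mod_cast Nat.lt_succ_iff.1 (mem_range.1 hj)
        apply one_div_le_one_div_of_le (mul_pos (by linarith) (by linarith))
        gcongr; linarith
    _ = ∑ i ∈ range (J + 1), 1 / (((i : ℝ) + 1) * (J + 1)) := by
        rw [← sum_range_reflect]
        refine sum_congr rfl fun i hi => ?_
        rw [Nat.cast_sub (by simp at hi; omega)]
        push_cast; ring_nf
    _ = harmonic (J + 1) / (J + 1) := by
        rw [harmonic_cast_eq_sum, sum_div]
        simp_rw [div_div]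

section Schur

variable {ι κ E F : Type*} [NormedAddCommGroup E] [InnerProductSpace ℝ E]
  [NormedAddCommGroup F] [InnerProductSpace ℝ F]

theorem HilbertBasis.opNorm_le_of_schur [Nonempty κ] (e : HilbertBasis ι ℝ E)
    (e' : HilbertBasis κ ℝ F) (A : E →L[ℝ] F) (s : Finset ι) (a : ι → κ → ℝ) {M : ℝ}
    (hA : ∀ u k, ⟪A u, e' k⟫_ℝ = ∑ j ∈ s, a j k * ⟪u, e j⟫_ℝ)
    (hrow : ∀ k, ∑ j ∈ s, |a j k| ≤ M)
    (hcol : ∀ j ∈ s, ∀ t : Finset κ, ∑ k ∈ t, |a j k| ≤ M) : ‖A‖ ≤ M := by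
  have hM : 0 ≤ M := (sum_nonneg fun j _ => abs_nonneg _).trans (hrow (Classical.arbitrary κ))
  refine A.opNorm_le_bound hM fun u => ?_
  rw [← pow_le_pow_iff_left₀ (norm_nonneg _) (by positivity) two_ne_zero]
  have hcoef : ∀ k, ⟪A u, e' k⟫_ℝ ^ 2 ≤ M * ∑ j ∈ s, |a j k| * ⟪u, e j⟫_ℝ ^ 2 := fun k => by
    rw [hA]
    calc (∑ j ∈ s, a j k * ⟪u, e j⟫_ℝ) ^ 2
        ≤ (∑ j ∈ s, |a j k|) * ∑ j ∈ s, |a j k| * ⟪u, e j⟫_ℝ ^ 2 :=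
          sum_sq_le_sum_mul_sum_of_sq_le_mul s (fun _ _ => abs_nonneg _)
            (fun _ _ => by positivity)
            (fun j _ => le_of_eq (by rw [mul_pow, ← sq_abs (a j k)]; ring))
      _ ≤ M * ∑ j ∈ s, |a j k| * ⟪u, e j⟫_ℝ ^ 2 := by gcongr; exact hrow k
  have hbessel : ∑ j ∈ s, ⟪u, e j⟫_ℝ ^ 2 ≤ ‖u‖ ^ 2 := by
    simpa [real_inner_comm] using e.orthonormal.sum_inner_products_le (s := s) (x := u)
  have hparseval : HasSum (fun k => ⟪A u, e' k⟫_ℝ ^ 2) (‖A u‖ ^ 2) := by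
    simpa [sq, real_inner_comm (e' _)] using e'.hasSum_inner_mul_inner (A u) (A u)
  refine hasSum_le_of_sum_le hparseval fun t => ?_
  calc ∑ k ∈ t, ⟪A u, e' k⟫_ℝ ^ 2 ≤ ∑ k ∈ t, M * ∑ j ∈ s, |a j k| * ⟪u, e j⟫_ℝ ^ 2 :=
        sum_le_sum fun k _ => hcoef k
    _ = M * ∑ j ∈ s, ⟪u, e j⟫_ℝ ^ 2 * ∑ k ∈ t, |a j k| := by
        rw [← mul_sum, sum_comm]; simp_rw [mul_sum, mul_comm]
    _ ≤ M * ∑ j ∈ s, ⟪u, e j⟫_ℝ ^ 2 * M := by gcongr with j hj; exact hcol j hj t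
    _ = M ^ 2 * ∑ j ∈ s, ⟪u, e j⟫_ℝ ^ 2 := by rw [← sum_mul]; ring
    _ ≤ (M * ‖u‖) ^ 2 := by rw [mul_pow]; gcongr

end Schur

section Projection

variable {ι H : Type*} [NormedAddCommGroup H] [InnerProductSpace ℝ H] [DecidableEq ι] {v : ι → H}

lemma Orthonormal.inner_sum_inner_smul_left (hv : Orthonormal ℝ v) (s : Finset ι) (w : H) (m : ι) :
    ⟪∑ n ∈ s, ⟪w, v n⟫_ℝ • v n, v m⟫_ℝ = if m ∈ s then ⟪w, v m⟫_ℝ else 0 := by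
  simp [sum_inner, real_inner_smul_left, orthonormal_iff_ite.mp hv]

lemma Orthonormal.inner_sub_proj_comp_comp_proj (hv : Orthonormal ℝ v) (s : Finset ι)
    (T P : H →L[ℝ] H) (hP : ∀ u, P u = ∑ n ∈ s, ⟪u, v n⟫_ℝ • v n) (u : H) (k : ι) :
    ⟪(ContinuousLinearMap.id ℝ H - P).comp (T.comp P) u, v k⟫_ℝ
      = ∑ j ∈ s, (if k ∈ s then 0 else ⟪T (v j), v k⟫_ℝ) * ⟪u, v j⟫_ℝ := by
  simp only [ContinuousLinearMap.comp_apply, sub_apply,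
    ContinuousLinearMap.id_apply, inner_sub_left, hP (T _), hv.inner_sum_inner_smul_left]
  rw [hP u, map_sum]
  split_ifs <;> simp [sum_inner, real_inner_smul_left, mul_comm]

end Projection

section LowerBlock

variable {J : ℕ} {c : ℝ} {b : ℕ → ℕ → ℝ}

lemma sum_range_abs_lowerBlock_le (hJ : 0 < J) (hc : 0 ≤ c)
    (hb : ∀ j k, j ≤ J → J < k → |b j k| ≤ c / ((k - j) * k)) (k : ℕ) :
    ∑ j ∈ range (J + 1), |if k ∈ range (J + 1) then 0 else b j k| ≤ c * (harmonic J / J) := by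
  split_ifs with hk
  · have hH : (0 : ℝ) ≤ harmonic J := by exact_mod_cast (harmonic_pos hJ.ne').le
    simpa using mul_nonneg hc (div_nonneg hH J.cast_nonneg)
  have hk : J < k := by simpa using hk
  calc ∑ j ∈ range (J + 1), |b j k| ≤ ∑ j ∈ range (J + 1), c * (1 / (((k : ℝ) - j) * k)) :=
        sum_le_sum fun j hj => (hb j k (Nat.lt_succ_iff.1 (mem_range.1 hj)) hk).trans_eq
          (mul_one_div _ _).symm
    _ ≤ c * (harmonic J / J) := by
        rw [← mul_sum]
        gcongr
        exact (sum_range_one_div_sub_mul_le hk).trans (harmonic_succ_div_le hJ)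

lemma sum_abs_lowerBlock_le (hJ : 0 < J) (hc : 0 ≤ c)
    (hb : ∀ j k, j ≤ J → J < k → |b j k| ≤ c / ((k - j) * k)) {j : ℕ} (hj : j ∈ range (J + 1))
    (t : Finset ℕ) :
    ∑ k ∈ t, |if k ∈ range (J + 1) then 0 else b j k| ≤ c * (harmonic J / J) := by
  have hjJ : j ≤ J := Nat.lt_succ_iff.1 (mem_range.1 hj)
  calc ∑ k ∈ t, |if k ∈ range (J + 1) then 0 else b j k|
      = ∑ k ∈ t with J < k, |b j k| := by
        rw [sum_filter]
        refine sum_congr rfl fun k _ => ?_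
        simp only [mem_range]
        split_ifs <;> first | omega | simp
    _ ≤ ∑ k ∈ t with J < k, c * (1 / (((k : ℝ) - J) * k)) := by
        refine sum_le_sum fun k hk => (hb j k hjJ (mem_filter.1 hk).2).trans ?_
        have hk : (J : ℝ) + 1 ≤ k := by exact_mod_cast (mem_filter.1 hk).2
        have hj : (j : ℝ) ≤ J := by exact_mod_cast hjJ
        rw [mul_one_div]
        exact div_le_div_of_nonneg_left hc (mul_pos (by linarith) (by linarith)) (by nlinarith)
    _ ≤ c * (harmonic J / J) := by
        rw [← mul_sum]
        gcongr
        exact sum_one_div_sub_mul_le hJ fun k hk => (mem_filter.1 hk).2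

end LowerBlock

/-- Schur-test bound on the lower-left block `(Id − P_J) T P_J`: under the
decay hypothesis `|⟨g_j, f_k⟩| ≤ η/(k² − (j + μ/(j+1))²)` for `j ≤ J < k`,
one has `‖(Id − P_J) T P_J‖ ≤ 4η log(J)/J`. -/
theorem stmt10 {H : Type*} [NormedAddCommGroup H] [InnerProductSpace ℝ H] [CompleteSpace H]
    (f : HilbertBasis ℕ ℝ H) (g : ℕ → H) (T : H →L[ℝ] H)
    (hT : ∀ n, T (f n) = g n)
    (η μ : ℝ) (hη : 0 < η) (hμ : 0 < μ)
    (J : ℕ) (hJ3 : 3 ≤ J) (hJμ : 2 * μ ≤ (J : ℝ))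
    (hdecay : ∀ j k : ℕ, j ≤ J → J < k →
      |⟪g j, f k⟫_ℝ| ≤ η / ((k : ℝ) ^ 2 - ((j : ℝ) + μ / ((j : ℝ) + 1)) ^ 2))
    (P : H →L[ℝ] H)
    -- `P` is the orthogonal projection onto `span{f_0, …, f_J}`:
    (hP : ∀ u : H, P u = ∑ n ∈ Finset.range (J + 1), ⟪u, f n⟫_ℝ • f n) :
    ‖(ContinuousLinearMap.id ℝ H - P).comp (T.comp P)‖ ≤
      4 * η * Real.log J / J := by
  have hJ : 0 < J := by omega
  have hentry : ∀ j k, j ≤ J → J < k → |⟪T (f j), f k⟫_ℝ| ≤ 2 * η / ((k - j) * k) :=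
    fun j k hj hk => by
      rw [hT]
      exact (hdecay j k hj hk).trans <| div_sq_sub_sq_le hη.le hμ.le hJμ j.cast_nonneg
        (by exact_mod_cast hj) (by exact_mod_cast hk)
  calc ‖(ContinuousLinearMap.id ℝ H - P).comp (T.comp P)‖ ≤ 2 * η * (harmonic J / J) :=
        f.opNorm_le_of_schur f _ (range (J + 1)) _
          (f.orthonormal.inner_sub_proj_comp_comp_proj _ T P hP)
          (sum_range_abs_lowerBlock_le hJ (by positivity) hentry)
          (fun _ hj => sum_abs_lowerBlock_le hJ (by positivity) hentry hj)
    _ ≤ 4 * η * Real.log J / J := by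
        rw [mul_div_assoc']
        gcongr ?_ / _
        nlinarith [harmonic_le_two_mul_log hJ3]
end

section
/- Let H be a separable Hilbert space with orthonormal basis (f_n)_{n∈ℕ₀}, let (g_n)_{n∈ℕ₀} ⊂ H, and let T : H → H be a bounded linear operator with T f_n = g_n for all n. Let P_J denote the orthogonal projection onto span{f_0,…,f_J} and define S := P_J T P_J + (Id − P_J). Suppose S is invertible and that δ := ‖T − S‖ satisfies δ·‖S^{−1}‖ < 1. Then T is invertible and for every u ∈ H: ‖u‖² ≤ C² · Σ_{j=0}^∞ |⟨u, g_j⟩|², where C := ‖S^{−1}‖ / (1 − δ‖S^{−1}‖). Moreover, if in addition δ < 1/(2(‖S^{−1}‖+1)), then C ≤ 2(δ^{−1} + 1). -/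
open scoped InnerProductSpace

/-- Quantitative Riesz-basis (lower frame) bound via finite sections: if
`S = P_J T P_J + (Id − P_J)` is invertible and `δ = ‖T − S‖` satisfies
`δ‖S⁻¹‖ < 1`, then `T` is invertible and
`‖u‖² ≤ C² ∑_j |⟨u, g_j⟩|²` with `C = ‖S⁻¹‖/(1 − δ‖S⁻¹‖)`; moreover if
`0 < δ < 1/(2(‖S⁻¹‖+1))` then `C ≤ 2(δ⁻¹ + 1)`. -/
theorem stmt12 {H : Type*} [NormedAddCommGroup H] [InnerProductSpace ℝ H] [CompleteSpace H]
    (f : HilbertBasis ℕ ℝ H) (g : ℕ → H) (T : H →L[ℝ] H)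
    (hT : ∀ n, T (f n) = g n)
    (J : ℕ) (P : H →L[ℝ] H)
    -- `P` is the orthogonal projection onto `span{f_0, …, f_J}`:
    (hP : ∀ u : H, P u = ∑ n ∈ Finset.range (J + 1), ⟪u, f n⟫_ℝ • f n)
    (S : H →L[ℝ] H)
    (hS : S = P.comp (T.comp P) + (ContinuousLinearMap.id ℝ H - P))
    -- `S` is invertible, with inverse `Sinv`:
    (Sinv : H →L[ℝ] H)
    (hS1 : Sinv.comp S = ContinuousLinearMap.id ℝ H)
    (hS2 : S.comp Sinv = ContinuousLinearMap.id ℝ H)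
    (δ : ℝ) (hδ : δ = ‖T - S‖)
    (hsmall : δ * ‖Sinv‖ < 1) :
    (∃ Tinv : H →L[ℝ] H, Tinv.comp T = ContinuousLinearMap.id ℝ H ∧
        T.comp Tinv = ContinuousLinearMap.id ℝ H) ∧
    (∀ u : H, ‖u‖ ^ 2 ≤ (‖Sinv‖ / (1 - δ * ‖Sinv‖)) ^ 2 * ∑' j : ℕ, ⟪u, g j⟫_ℝ ^ 2) ∧
    (0 < δ → δ < 1 / (2 * (‖Sinv‖ + 1)) →
      ‖Sinv‖ / (1 - δ * ‖Sinv‖) ≤ 2 * (δ⁻¹ + 1)) := by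
  have hδ0 : 0 ≤ δ := hδ ▸ norm_nonneg _
  have hs0 : (0:ℝ) ≤ ‖Sinv‖ := norm_nonneg _
  have hpos : 0 < 1 - δ * ‖Sinv‖ := by linarith
  -- invertibility of T
  have hS1' : Sinv * S = 1 := hS1
  have hS2' : S * Sinv = 1 := hS2
  have hEnorm : ‖Sinv * (S - T)‖ < 1 := by
    calc ‖Sinv * (S - T)‖ ≤ ‖Sinv‖ * ‖S - T‖ := norm_mul_le _ _
    _ = δ * ‖Sinv‖ := by rw [hδ, norm_sub_rev]; ring
    _ < 1 := hsmall
  let Su : (H →L[ℝ] H)ˣ := ⟨S, Sinv, hS2', hS1'⟩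
  let U : (H →L[ℝ] H)ˣ := Su * Units.oneSub (Sinv * (S - T)) hEnorm
  have hUval : (U : H →L[ℝ] H) = T := by
    show S * (1 - Sinv * (S - T)) = T
    rw [mul_sub, ← mul_assoc, hS2', mul_one, one_mul, sub_sub_cancel]
  refine ⟨⟨(U⁻¹ : (H →L[ℝ] H)ˣ), ?_, ?_⟩, ?_, ?_⟩
  · show (U⁻¹ : (H →L[ℝ] H)ˣ) * T = 1
    rw [← hUval, U.inv_mul]
  · show T * (U⁻¹ : (H →L[ℝ] H)ˣ) = 1
    rw [← hUval, U.mul_inv]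
  · intro u
    set v : H := ContinuousLinearMap.adjoint T u with hv
    -- key norm inequality
    have hid : (ContinuousLinearMap.adjoint Sinv).comp (ContinuousLinearMap.adjoint S)
        = ContinuousLinearMap.id ℝ H := by
      rw [← ContinuousLinearMap.adjoint_comp, hS2, ContinuousLinearMap.adjoint_id]
    have hu : u = ContinuousLinearMap.adjoint Sinv (ContinuousLinearMap.adjoint S u) := by
      conv_lhs => rw [← ContinuousLinearMap.id_apply (R₁ := ℝ) u, ← hid]
      rfl
    have hSu : ContinuousLinearMap.adjoint S u
        = v + ContinuousLinearMap.adjoint (S - T) u := by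
      rw [hv, ← ContinuousLinearMap.add_apply, ← map_add, add_sub_cancel]
    have hkey : ‖u‖ ≤ (‖Sinv‖ / (1 - δ * ‖Sinv‖)) * ‖v‖ := by
      have h1 : ‖u‖ ≤ ‖Sinv‖ * ‖ContinuousLinearMap.adjoint S u‖ := by
        calc ‖u‖ = ‖ContinuousLinearMap.adjoint Sinv (ContinuousLinearMap.adjoint S u)‖ := by
              rw [← hu]
        _ ≤ ‖ContinuousLinearMap.adjoint Sinv‖ * ‖ContinuousLinearMap.adjoint S u‖ :=
              ContinuousLinearMap.le_opNorm _ _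
        _ = ‖Sinv‖ * ‖ContinuousLinearMap.adjoint S u‖ := by
              rw [ContinuousLinearMap.adjoint.norm_map]
      have h2 : ‖ContinuousLinearMap.adjoint S u‖ ≤ ‖v‖ + δ * ‖u‖ := by
        rw [hSu]
        refine (norm_add_le _ _).trans ?_
        gcongr
        calc ‖ContinuousLinearMap.adjoint (S - T) u‖
            ≤ ‖ContinuousLinearMap.adjoint (S - T)‖ * ‖u‖ :=
              ContinuousLinearMap.le_opNorm _ _
        _ = δ * ‖u‖ := by rw [ContinuousLinearMap.adjoint.norm_map, norm_sub_rev, ← hδ]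
      have h3 : ‖u‖ * (1 - δ * ‖Sinv‖) ≤ ‖Sinv‖ * ‖v‖ := by
        have := h1.trans (by nlinarith [norm_nonneg v] : ‖Sinv‖ * ‖ContinuousLinearMap.adjoint S u‖ ≤ ‖Sinv‖ * (‖v‖ + δ * ‖u‖))
        nlinarith [norm_nonneg u]
      rw [div_mul_eq_mul_div, le_div_iff₀ hpos]
      linarith [h3, mul_comm ‖Sinv‖ ‖v‖]
    have hsum : ∑' j : ℕ, ⟪u, g j⟫_ℝ ^ 2 = ‖v‖ ^ 2 := by
      have : ∀ j : ℕ, ⟪u, g j⟫_ℝ ^ 2 = ⟪v, f j⟫_ℝ * ⟪f j, v⟫_ℝ := by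
        intro j
        rw [← hT j, ← ContinuousLinearMap.adjoint_inner_left, ← hv, sq,
          real_inner_comm (f j) v]
      rw [tsum_congr this, f.tsum_inner_mul_inner v v, real_inner_self_eq_norm_sq]
    rw [hsum, ← mul_pow]
    exact pow_le_pow_left₀ (norm_nonneg u) hkey 2
  · intro hδpos hδlt
    have h2 : 0 < 2 * (‖Sinv‖ + 1) := by linarith
    rw [lt_div_iff₀ h2] at hδlt
    have hδinv : 0 < δ⁻¹ := inv_pos.mpr hδpos
    have : δ * δ⁻¹ = 1 := mul_inv_cancel₀ (ne_of_gt hδpos)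
    rw [div_le_iff₀ hpos]
    nlinarith
end

section
/- Let M > 0 and let (λ_n), (α_n) be spectral data in the class Ω_{0,M}. Then the series defining F(x,y) converges for every (x,y) ∈ [0,π]², and for every N ≥ 1: ‖F_N − F‖_{L^∞([0,π]²)} ≤ C_M^{(1)} · N^{−1/2}, where C_M^{(1)} := M·cosh(2πM)·[ (8π²/√6 + 2π)·M + 5 ]. -/
/-!
For `t ∈ [0, π]` we have `|Im (ρ_n t)| ≤ π ‖ρ_n - n‖ ≤ π M`, so on the strip containing all the
arguments `cos` is bounded by `cosh (π M)` and is `cosh (π M)`-Lipschitz. Since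
`ρ_n - n = κ_n / (n + 1)`, the `n`-th summand is at most
`cosh (π M)² (|κ̃_n| + 4 ‖κ_n‖) / (n + 1)` on `[0, π]²`. By Cauchy–Schwarz against
`∑_{m > K} m⁻² ≤ K⁻¹`, the tail from index `K` is at most `5 M cosh (π M)² / √K`; take `K = N + 1`
and use `cosh (π M)² ≤ cosh (2 π M)`.
-/

open Real

lemma Complex.norm_cos_le_cosh_im (z : ℂ) : ‖Complex.cos z‖ ≤ Real.cosh z.im := by
  have h₁ : ‖Complex.exp (z * Complex.I)‖ = Real.exp (-z.im) := by
    rw [Complex.norm_exp, Complex.mul_I_re]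
  have h₂ : ‖Complex.exp (-z * Complex.I)‖ = Real.exp z.im := by
    simp [Complex.norm_exp]
  rw [Complex.cos, Real.cosh_eq, norm_div, Complex.norm_two, ← h₁, ← h₂, add_comm (‖_‖)]
  gcongr
  exact norm_add_le _ _

lemma Complex.norm_sin_le_cosh_im (z : ℂ) : ‖Complex.sin z‖ ≤ Real.cosh z.im := by
  simpa [Complex.cos_sub_pi_div_two] using Complex.norm_cos_le_cosh_im (z - π / 2)

lemma Complex.norm_cos_sub_cos_le {c : ℝ} {a b : ℂ} (ha : |a.im| ≤ c) (hb : |b.im| ≤ c) :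
    ‖Complex.cos a - Complex.cos b‖ ≤ Real.cosh c * ‖a - b‖ := by
  have hstrip : Convex ℝ (Complex.imLm ⁻¹' Set.Icc (-c) c) :=
    (convex_Icc (-c) c).linear_preimage Complex.imLm
  refine hstrip.norm_image_sub_le_of_norm_hasDerivWithin_le
    (fun z _ => (Complex.hasDerivAt_cos z).hasDerivWithinAt) (fun z hz => ?_)
    (abs_le.1 hb) (abs_le.1 ha)
  rw [norm_neg]
  refine (Complex.norm_sin_le_cosh_im z).trans ?_
  rw [← Real.cosh_abs z.im, ← Real.cosh_abs c]
  exact Real.cosh_le_cosh.2 (by rw [abs_abs, abs_abs]; exact (abs_le.2 hz).trans (le_abs_self c))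

section CosineBounds

variable {ρ : ℂ} {r M t : ℝ}

lemma abs_im_mul_le (hρ : ‖ρ - r‖ ≤ M) (ht : t ∈ Set.Icc 0 π) : |(ρ * t).im| ≤ π * M := by
  have him : (ρ * t).im = (ρ - r).im * t := by simp
  rw [him, abs_mul, abs_of_nonneg ht.1, mul_comm π]
  exact mul_le_mul ((Complex.abs_im_le_norm _).trans hρ) ht.2 ht.1
    ((norm_nonneg _).trans hρ)

lemma abs_re_cos_mul_le (hρ : ‖ρ - r‖ ≤ M) (ht : t ∈ Set.Icc 0 π) :
    |(Complex.cos (ρ * t)).re| ≤ Real.cosh (π * M) := by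
  refine (Complex.abs_re_le_norm _).trans <| (Complex.norm_cos_le_cosh_im _).trans ?_
  rw [← Real.cosh_abs (ρ * t).im, ← Real.cosh_abs (π * M)]
  exact Real.cosh_le_cosh.2 (by rw [abs_abs, abs_abs]; exact (abs_im_mul_le hρ ht).trans (le_abs_self _))

lemma abs_re_cos_mul_sub_cos_le (hρ : ‖ρ - r‖ ≤ M) (ht : t ∈ Set.Icc 0 π) :
    |(Complex.cos (ρ * t)).re - Real.cos (r * t)| ≤ Real.cosh (π * M) * (π * ‖ρ - r‖) := by
  have hr : ‖(r : ℂ) - r‖ ≤ M := by simpa using (norm_nonneg _).trans hρ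
  have hcos : Real.cos (r * t) = (Complex.cos (r * t)).re := by
    rw [← Complex.ofReal_mul, Complex.cos_ofReal_re]
  rw [hcos, ← Complex.sub_re]
  refine (Complex.abs_re_le_norm _).trans <|
    (Complex.norm_cos_sub_cos_le (abs_im_mul_le hρ ht) (abs_im_mul_le hr ht)).trans ?_
  gcongr
  rw [← sub_mul, norm_mul, Complex.norm_real, Real.norm_of_nonneg ht.1, mul_comm]
  exact mul_le_mul_of_nonneg_right ht.2 (norm_nonneg _)

end CosineBounds

lemma abs_perturbed_product_sub_le {c δ e g₁ g₂ u₁ u₂ : ℝ} (hc : 1 ≤ c)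
    (hg₁ : |g₁| ≤ c) (hg₂ : |g₂| ≤ c) (hu₂ : |u₂| ≤ 1)
    (h₁ : |g₁ - u₁| ≤ c * (π * δ)) (h₂ : |g₂ - u₂| ≤ c * (π * δ)) :
    |(2 / π + e) * g₁ * g₂ - 2 / π * u₁ * u₂| ≤ c ^ 2 * (|e| + 4 * δ) := by
  have hδ : 0 ≤ δ := by
    have := (abs_nonneg _).trans h₁
    exact nonneg_of_mul_nonneg_right (nonneg_of_mul_nonneg_right this (by linarith)) pi_pos
  have hsplit : (2 / π + e) * g₁ * g₂ - 2 / π * u₁ * u₂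
      = e * (g₁ * g₂) + 2 / π * (g₁ * (g₂ - u₂) + u₂ * (g₁ - u₁)) := by ring
  have hcδ : c * δ ≤ c ^ 2 * δ := mul_le_mul_of_nonneg_right (by nlinarith) hδ
  calc |(2 / π + e) * g₁ * g₂ - 2 / π * u₁ * u₂|
      ≤ |e| * (c * c) + 2 / π * (c * (c * (π * δ)) + 1 * (c * (π * δ))) := by
        rw [hsplit]
        refine (abs_add_le _ _).trans (add_le_add ?_ ?_)
        · rw [abs_mul, abs_mul]; gcongr
        · rw [abs_mul, abs_of_pos (by positivity : (0 : ℝ) < 2 / π)]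
          refine mul_le_mul_of_nonneg_left ((abs_add_le _ _).trans ?_) (by positivity)
          rw [abs_mul, abs_mul]
          gcongr
    _ = c ^ 2 * (|e| + 2 * δ) + 2 * (c * δ) := by field_simp; ring
    _ ≤ c ^ 2 * (|e| + 4 * δ) := by nlinarith

lemma abs_summand_le {M e x y : ℝ} {n : ℕ} {k : ℂ} (hk : ‖k‖ ≤ M)
    (hx : x ∈ Set.Icc 0 π) (hy : y ∈ Set.Icc 0 π) :
    |(2 / π + e / (n + 1)) * (Complex.cos ((n + k / (n + 1)) * x)).re *
        (Complex.cos ((n + k / (n + 1)) * y)).re - 2 / π * Real.cos (n * x) * Real.cos (n * y)|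
      ≤ Real.cosh (π * M) ^ 2 * ((|e| + 4 * ‖k‖) / (n + 1)) := by
  have hn : (0 : ℝ) < n + 1 := by positivity
  have hdist : ‖(n + k / (n + 1) : ℂ) - (n : ℝ)‖ = ‖k‖ / (n + 1) := by
    rw [Complex.ofReal_natCast, add_sub_cancel_left, norm_div]
    norm_cast
  have hδ : ‖(n + k / (n + 1) : ℂ) - (n : ℝ)‖ ≤ M := by
    rw [hdist, div_le_iff₀ hn]
    nlinarith [norm_nonneg k, (Nat.cast_nonneg n : (0 : ℝ) ≤ n)]
  have := abs_perturbed_product_sub_le (e := e / (n + 1)) (Real.one_le_cosh (π * M))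
    (abs_re_cos_mul_le hδ hx) (abs_re_cos_mul_le hδ hy) (Real.abs_cos_le_one _)
    (abs_re_cos_mul_sub_cos_le hδ hx) (abs_re_cos_mul_sub_cos_le hδ hy)
  rw [hdist] at this
  refine this.trans_eq ?_
  rw [abs_div, abs_of_pos hn]
  ring

lemma summable_and_tsum_inv_sq_nat_add_le {K : ℕ} (hK : K ≠ 0) :
    (Summable fun i : ℕ => (((i + K + 1 : ℕ) : ℝ) ^ 2)⁻¹) ∧
      ∑' i : ℕ, (((i + K + 1 : ℕ) : ℝ) ^ 2)⁻¹ ≤ (K : ℝ)⁻¹ := by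
  have hs : Summable fun i : ℕ => (((i + K + 1 : ℕ) : ℝ) ^ 2)⁻¹ :=
    (summable_nat_add_iff (f := fun n : ℕ => ((n : ℝ) ^ 2)⁻¹) (K + 1)).2
      (Real.summable_nat_pow_inv.2 one_lt_two)
  refine ⟨hs, hs.tsum_le_of_sum_range_le fun n => ?_⟩
  have hIoc : ∑ i ∈ Finset.range n, (((i + K + 1 : ℕ) : ℝ) ^ 2)⁻¹
      = ∑ j ∈ Finset.Ioc K (K + n), ((j : ℝ) ^ 2)⁻¹ := by
    rw [← Finset.Ico_add_one_add_one_eq_Ioc, Finset.sum_Ico_eq_sum_range]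
    refine Finset.sum_congr (by congr 1; omega) fun i _ => ?_
    congr 3; omega
  rw [hIoc]
  have := sum_Ioc_inv_sq_le_sub (α := ℝ) hK (Nat.le_add_right K n)
  have : (0 : ℝ) ≤ ((K + n : ℕ) : ℝ)⁻¹ := by positivity
  linarith

lemma summable_and_tsum_shift_div_le {a : ℕ → ℝ} {A : ℝ} (ha : ∀ n, 0 ≤ a n)
    (ha2 : Summable fun n => a n ^ 2) (hA : ∑' n, a n ^ 2 ≤ A ^ 2) (hA0 : 0 ≤ A)
    {K : ℕ} (hK : K ≠ 0) :
    (Summable fun i => a (i + K) / (((i + K : ℕ) : ℝ) + 1)) ∧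
      ∑' i, a (i + K) / (((i + K : ℕ) : ℝ) + 1) ≤ A / √K := by
  obtain ⟨hw, hwK⟩ := summable_and_tsum_inv_sq_nat_add_le hK
  have hw_eq : ∀ i : ℕ,
      ((((i + K : ℕ) : ℝ) + 1)⁻¹) ^ (2 : ℝ) = (((i + K + 1 : ℕ) : ℝ) ^ 2)⁻¹ := by
    intro i; rw [Real.rpow_two]; push_cast; rw [inv_pow]
  have ha2K : Summable fun i => a (i + K) ^ 2 :=
    (summable_nat_add_iff (f := fun n => a n ^ 2) K).2 ha2
  obtain ⟨hs, hle⟩ := Real.summable_and_inner_le_Lp_mul_Lq_tsum_of_nonneg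
    (f := fun i => a (i + K)) (g := fun i => (((i + K : ℕ) : ℝ) + 1)⁻¹)
    Real.HolderConjugate.two_two (fun i => ha (i + K)) (fun i => by positivity)
    (by simpa only [Real.rpow_two] using ha2K) (by simpa only [hw_eq] using hw)
  simp only [hw_eq, ← div_eq_mul_inv, Real.rpow_two, ← Real.sqrt_eq_rpow] at hs hle
  refine ⟨hs, hle.trans ?_⟩
  have htail : ∑' i, a (i + K) ^ 2 ≤ A ^ 2 :=
    (ha2K.tsum_le_tsum_of_inj (· + K) (add_left_injective K)
      (fun _ _ => sq_nonneg _) (fun _ => le_rfl) ha2).trans hA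
  calc √(∑' i, a (i + K) ^ 2) * √(∑' i, (((i + K + 1 : ℕ) : ℝ) ^ 2)⁻¹)
      ≤ √(A ^ 2) * √((K : ℝ)⁻¹) := by gcongr
    _ = A / √K := by rw [Real.sqrt_sq hA0, Real.sqrt_inv, div_eq_mul_inv]

lemma summable_and_abs_tsum_shift_le {f a : ℕ → ℝ} {A C : ℝ} (ha : ∀ n, 0 ≤ a n)
    (ha2 : Summable fun n => a n ^ 2) (hA : ∑' n, a n ^ 2 ≤ A ^ 2) (hA0 : 0 ≤ A) (hC : 0 ≤ C)
    (hf : ∀ m, |f m| ≤ C * (a m / (m + 1))) {K : ℕ} (hK : K ≠ 0) :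
    (Summable fun i => f (i + K)) ∧ |∑' i, f (i + K)| ≤ C * (A / √K) := by
  obtain ⟨hs, hle⟩ := summable_and_tsum_shift_div_le ha ha2 hA hA0 hK
  have hdom := hs.mul_left C
  refine ⟨hdom.of_norm_bounded fun i => hf (i + K), ?_⟩
  rw [← Real.norm_eq_abs]
  refine (tsum_of_norm_bounded hdom.hasSum fun i => hf (i + K)).trans ?_
  rw [tsum_mul_left]
  gcongr

lemma summable_and_tsum_sq_add_mul_le {x y : ℕ → ℝ} {A t : ℝ} (ht : 0 ≤ t)
    (hx : Summable fun n => x n ^ 2) (hy : Summable fun n => y n ^ 2)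
    (hxA : ∑' n, x n ^ 2 ≤ A ^ 2) (hyA : ∑' n, y n ^ 2 ≤ A ^ 2) :
    (Summable fun n => (x n + t * y n) ^ 2) ∧
      ∑' n, (x n + t * y n) ^ 2 ≤ ((1 + t) * A) ^ 2 := by
  have hdom : Summable fun n => (1 + t) * (x n ^ 2 + t * y n ^ 2) :=
    (hx.add (hy.mul_left t)).mul_left (1 + t)
  -- `(1 + t) (x² + t y²) - (x + t y)² = t (x - y)²`
  have hle : ∀ n, (x n + t * y n) ^ 2 ≤ (1 + t) * (x n ^ 2 + t * y n ^ 2) := fun n => by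
    nlinarith [mul_nonneg ht (sq_nonneg (x n - y n))]
  have hs := hdom.of_nonneg_of_le (fun n => sq_nonneg _) hle
  refine ⟨hs, (hs.tsum_le_tsum hle hdom).trans ?_⟩
  rw [tsum_mul_left, (hx.tsum_add (hy.mul_left t)), tsum_mul_left]
  calc (1 + t) * (∑' n, x n ^ 2 + t * ∑' n, y n ^ 2) ≤ (1 + t) * (A ^ 2 + t * A ^ 2) := by
        gcongr
    _ = ((1 + t) * A) ^ 2 := by ring

lemma Real.cosh_sq_le_cosh_two_mul (x : ℝ) : Real.cosh x ^ 2 ≤ Real.cosh (2 * x) := by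
  rw [Real.cosh_two_mul]
  nlinarith [sq_nonneg (Real.sinh x)]

lemma cosh_sq_mul_five_mul_le {M : ℝ} (hM : 0 ≤ M) :
    Real.cosh (π * M) ^ 2 * (1 + 4) * M ≤
      M * Real.cosh (2 * π * M) * ((8 * π ^ 2 / √6 + 2 * π) * M + 5) := by
  have hcosh : Real.cosh (π * M) ^ 2 ≤ Real.cosh (2 * π * M) := by
    rw [mul_assoc]; exact Real.cosh_sq_le_cosh_two_mul _
  have hA : 0 ≤ M * Real.cosh (2 * π * M) * ((8 * π ^ 2 / √6 + 2 * π) * M) := by positivity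
  nlinarith [mul_le_mul_of_nonneg_left hcosh hM]

lemma Real.inv_sqrt_add_one_le_rpow_neg_half {x : ℝ} (hx : 0 < x) :
    (√(x + 1))⁻¹ ≤ x ^ (-(1 : ℝ) / 2) := by
  rw [neg_div, Real.rpow_neg hx.le, ← Real.sqrt_eq_rpow]
  gcongr
  linarith

theorem stmt13_general (M : ℝ) (hM : 0 < M)
    (α : ℕ → ℝ)
    (ρ κ : ℕ → ℂ) (κt : ℕ → ℝ)
    (hρ : ∀ n : ℕ, ρ n = (n : ℂ) + κ n / ((n : ℂ) + 1))
    (hαn : ∀ n : ℕ, 1 / α n = 2 / Real.pi + κt n / ((n : ℝ) + 1))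
    (hκsum : Summable fun n => ‖κ n‖ ^ 2) (hκM : ∑' n, ‖κ n‖ ^ 2 ≤ M ^ 2)
    (hκtsum : Summable fun n => (κt n) ^ 2) (hκtM : ∑' n, (κt n) ^ 2 ≤ M ^ 2)
    -- `G n t = cos(ρ_n t)` (real-valued since `ρ_n² ∈ ℝ`):
    (G : ℕ → ℝ → ℝ) (hG : ∀ n t, G n t = (Complex.cos (ρ n * (t : ℂ))).re)
    -- the `n`-th summand of the series defining `F`:
    (term : ℕ → ℝ → ℝ → ℝ)
    (hterm : ∀ n x y, term n x y =
      (1 / α n) * G n x * G n y -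
        (2 / Real.pi) * Real.cos (n * x) * Real.cos (n * y))
    (F : ℝ → ℝ → ℝ)
    (hF : ∀ x y, F x y =
      (1 / α 0) * G 0 x * G 0 y - 1 / Real.pi + ∑' n : ℕ, term (n + 1) x y)
    (FN : ℕ → ℝ → ℝ → ℝ)
    (hFN : ∀ N x y, FN N x y =
      (1 / α 0) * G 0 x * G 0 y - 1 / Real.pi +
        ∑ n ∈ Finset.range N, term (n + 1) x y)
    (C1 : ℝ)
    (hC1 : C1 = M * Real.cosh (2 * Real.pi * M) *
      ((8 * Real.pi ^ 2 / Real.sqrt 6 + 2 * Real.pi) * M + 5)) :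
    (∀ x ∈ Set.Icc (0 : ℝ) Real.pi, ∀ y ∈ Set.Icc (0 : ℝ) Real.pi,
      Summable fun n : ℕ => term (n + 1) x y) ∧
    (∀ N : ℕ, 1 ≤ N → ∀ x ∈ Set.Icc (0 : ℝ) Real.pi, ∀ y ∈ Set.Icc (0 : ℝ) Real.pi,
      |FN N x y - F x y| ≤ C1 * (N : ℝ) ^ (-(1 : ℝ) / 2)) := by
  set c := Real.cosh (π * M)
  have hκ : ∀ m, ‖κ m‖ ≤ M := fun m => (le_abs_self _).trans <|
    abs_le_of_sq_le_sq ((hκsum.le_tsum m fun _ _ => sq_nonneg _).trans hκM) hM.le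
  obtain ⟨hd, hdM⟩ := summable_and_tsum_sq_add_mul_le (x := fun m => |κt m|)
    (y := fun m => ‖κ m‖) (t := 4) (by norm_num) (by simpa only [sq_abs] using hκtsum) hκsum
    (by simpa only [sq_abs] using hκtM) hκM
  have hterm_le : ∀ x ∈ Set.Icc 0 π, ∀ y ∈ Set.Icc 0 π, ∀ m,
      |term m x y| ≤ c ^ 2 * ((|κt m| + 4 * ‖κ m‖) / (m + 1)) := by
    intro x hx y hy m
    rw [hterm, hαn, hG, hG, hρ]
    exact abs_summand_le (hκ m) hx hy
  have htail : ∀ K ≠ 0, ∀ x ∈ Set.Icc 0 π, ∀ y ∈ Set.Icc 0 π,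
      Summable (fun i => term (i + K) x y) ∧
        |∑' i, term (i + K) x y| ≤ c ^ 2 * ((1 + 4) * M / √K) := fun K hK x hx y hy =>
    summable_and_abs_tsum_shift_le (fun m => by positivity) hd hdM (by positivity)
      (by positivity) (hterm_le x hx y hy) hK
  refine ⟨fun x hx y hy => (htail 1 one_ne_zero x hx y hy).1, fun N hN x hx y hy => ?_⟩
  have hsplit : FN N x y - F x y = -∑' i, term (i + N + 1) x y := by
    rw [hFN, hF, ← (htail 1 one_ne_zero x hx y hy).1.sum_add_tsum_nat_add N]
    ring
  have hc : c ^ 2 * (1 + 4) * M ≤ C1 := hC1 ▸ cosh_sq_mul_five_mul_le hM.le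
  have hN : (√(N + 1 : ℕ))⁻¹ ≤ (N : ℝ) ^ (-(1 : ℝ) / 2) := by
    simpa using Real.inv_sqrt_add_one_le_rpow_neg_half (x := N) (by exact_mod_cast hN)
  rw [hsplit, abs_neg]
  calc _ ≤ c ^ 2 * ((1 + 4) * M / √(N + 1 : ℕ)) := (htail (N + 1) N.succ_ne_zero x hx y hy).2
    _ = c ^ 2 * (1 + 4) * M * (√(N + 1 : ℕ))⁻¹ := by ring
    _ ≤ C1 * (N : ℝ) ^ (-(1 : ℝ) / 2) :=
        mul_le_mul hc hN (by positivity) ((by positivity : 0 ≤ c ^ 2 * (1 + 4) * M).trans hc)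

/-- For spectral data in the class `Ω_{0,M}`, the series defining the
Gel'fand–Levitan data kernel `F` converges on `[0,π]²`, and the truncations
satisfy `‖F_N − F‖_∞ ≤ C_M^{(1)} N^{−1/2}` with
`C_M^{(1)} = M cosh(2πM)[(8π²/√6 + 2π)M + 5]`. -/
theorem stmt13 (M : ℝ) (hM : 0 < M)
    (lam α : ℕ → ℝ) (hα : ∀ n, 0 < α n)
    (ρ κ : ℕ → ℂ) (κt : ℕ → ℝ)
    (hρsq : ∀ n, (ρ n) ^ 2 = ((lam n : ℝ) : ℂ))
    (hρre : ∀ n, 0 ≤ (ρ n).re)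
    (hρ : ∀ n : ℕ, ρ n = (n : ℂ) + κ n / ((n : ℂ) + 1))
    (hαn : ∀ n : ℕ, 1 / α n = 2 / Real.pi + κt n / ((n : ℝ) + 1))
    (hκsum : Summable fun n => ‖κ n‖ ^ 2) (hκM : ∑' n, ‖κ n‖ ^ 2 ≤ M ^ 2)
    (hκtsum : Summable fun n => (κt n) ^ 2) (hκtM : ∑' n, (κt n) ^ 2 ≤ M ^ 2)
    -- `G n t = cos(ρ_n t)` (real-valued since `ρ_n² ∈ ℝ`):
    (G : ℕ → ℝ → ℝ) (hG : ∀ n t, G n t = (Complex.cos (ρ n * (t : ℂ))).re)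
    -- the `n`-th summand of the series defining `F`:
    (term : ℕ → ℝ → ℝ → ℝ)
    (hterm : ∀ n x y, term n x y =
      (1 / α n) * G n x * G n y -
        (2 / Real.pi) * Real.cos (n * x) * Real.cos (n * y))
    (F : ℝ → ℝ → ℝ)
    (hF : ∀ x y, F x y =
      (1 / α 0) * G 0 x * G 0 y - 1 / Real.pi + ∑' n : ℕ, term (n + 1) x y)
    (FN : ℕ → ℝ → ℝ → ℝ)
    (hFN : ∀ N x y, FN N x y =
      (1 / α 0) * G 0 x * G 0 y - 1 / Real.pi +
        ∑ n ∈ Finset.range N, term (n + 1) x y)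
    (C1 : ℝ)
    (hC1 : C1 = M * Real.cosh (2 * Real.pi * M) *
      ((8 * Real.pi ^ 2 / Real.sqrt 6 + 2 * Real.pi) * M + 5)) :
    (∀ x ∈ Set.Icc (0 : ℝ) Real.pi, ∀ y ∈ Set.Icc (0 : ℝ) Real.pi,
      Summable fun n : ℕ => term (n + 1) x y) ∧
    (∀ N : ℕ, 1 ≤ N → ∀ x ∈ Set.Icc (0 : ℝ) Real.pi, ∀ y ∈ Set.Icc (0 : ℝ) Real.pi,
      |FN N x y - F x y| ≤ C1 * (N : ℝ) ^ (-(1 : ℝ) / 2)) :=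
  stmt13_general M hM α ρ κ κt hρ hαn hκsum hκM hκtsum hκtM G hG term hterm F hF FN hFN C1 hC1
end

section
/- Let M > 0 and let (λ_n), (α_n) be spectral data in the class Ω_{0,M}. Define f_0(t) := π^{−1/2}, f_n(t) := (2/π)^{1/2}cos(nt) for n ≥ 1, and g_n(t) := α_n^{−1/2}cos(ρ_n t) for n ∈ ℕ₀. Then for every integer J ≥ 1: Ω_J := ( Σ_{n=J+1}^∞ ‖g_n − f_n‖²_{L²([0,π])} )^{1/2} ≤ C_Ω / J, where C_Ω := M·π·cosh(Mπ)·√( (3/2)·(1 + (2π)²M² + (2+πM)²) ). -/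
/-! Write `ρ_n t = n t + w` with `‖w‖ ≤ π ‖κ_n‖ / (n + 1) ≤ Mπ`. On `[0, π]` the difference
`g_n - f_n` splits as `(α_n^{-1/2} - (2/π)^{1/2}) Re cos (ρ_n t) + (2/π)^{1/2} Re (cos (n t + w) - cos (n t))`.
The first factor is `O(|κ̃_n| / (n + 1))` because `√` is Lipschitz away from `0`, the second term is
`O(‖κ_n‖ / (n + 1))` by the mean value theorem, and `cosh (Mπ)` bounds `cos` and `sin` on the strip
`|Im z| ≤ Mπ`. Squaring, integrating over `[0, π]` and summing over `n > J` gives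
`Ω_J² ≤ 5 (Mπ cosh (Mπ) / J)² ≤ (C_Ω / J)²`. -/

open MeasureTheory
open scoped ENNReal

namespace Complex

theorem norm_cos_le_cosh_im_s14 (z : ℂ) : ‖cos z‖ ≤ Real.cosh z.im := by
  have h1 : ‖exp (z * I)‖ = Real.exp (-z.im) := by simp [norm_exp]
  have h2 : ‖exp (-z * I)‖ = Real.exp z.im := by simp [norm_exp]
  calc ‖cos z‖ = ‖exp (z * I) + exp (-z * I)‖ / 2 := by simp [cos]
    _ ≤ (‖exp (z * I)‖ + ‖exp (-z * I)‖) / 2 := by gcongr; exact norm_add_le _ _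
    _ = Real.cosh z.im := by rw [h1, h2, Real.cosh_eq]; ring

theorem norm_sin_le_cosh_im_s14 (z : ℂ) : ‖sin z‖ ≤ Real.cosh z.im := by
  have h1 : ‖exp (z * I)‖ = Real.exp (-z.im) := by simp [norm_exp]
  have h2 : ‖exp (-z * I)‖ = Real.exp z.im := by simp [norm_exp]
  calc ‖sin z‖ = ‖exp (-z * I) - exp (z * I)‖ / 2 := by simp [sin]
    _ ≤ (‖exp (-z * I)‖ + ‖exp (z * I)‖) / 2 := by gcongr; exact norm_sub_le _ _
    _ = Real.cosh z.im := by rw [h1, h2, Real.cosh_eq]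

theorem norm_cos_add_sub_cos_le (z w : ℂ) :
    ‖cos (z + w) - cos z‖ ≤ ‖w‖ * Real.cosh (|z.im| + ‖w‖) := by
  have hderiv : ∀ p ∈ Metric.closedBall z ‖w‖, ‖deriv cos p‖ ≤ Real.cosh (|z.im| + ‖w‖) := by
    intro p hp
    rw [deriv_cos', norm_neg]
    refine (norm_sin_le_cosh_im_s14 p).trans (Real.cosh_le_cosh.2 ?_)
    have hpz : |p.im - z.im| ≤ ‖w‖ := by
      simpa using (abs_im_le_norm (p - z)).trans (mem_closedBall_iff_norm.1 hp)
    rw [abs_of_nonneg (by positivity : 0 ≤ |z.im| + ‖w‖)]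
    linarith [abs_sub_abs_le_abs_sub p.im z.im]
  have := (convex_closedBall z ‖w‖).norm_image_sub_le_of_norm_deriv_le (y := z + w)
    (fun p _ => differentiableAt_cos) hderiv (Metric.mem_closedBall_self (norm_nonneg w))
    (by simp)
  simpa [mul_comm] using this

end Complex

theorem Real.abs_sqrt_sub_sqrt_le {a b : ℝ} (ha : 0 ≤ a) (hb : 0 < b) :
    |√a - √b| ≤ |a - b| / √b := by
  have hsb : 0 < √b := Real.sqrt_pos.2 hb
  rw [le_div_iff₀ hsb]
  calc |√a - √b| * √b ≤ (√a + √b) * |√a - √b| := by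
        rw [mul_comm]; gcongr; linarith [Real.sqrt_nonneg a]
    _ = |a - b| := by
      rw [← abs_of_nonneg (by positivity : 0 ≤ √a + √b), ← abs_mul, ← sq_sub_sq,
        Real.sq_sqrt ha, Real.sq_sqrt hb.le]

theorem setIntegral_sq_le_of_abs_le {X : Type*} [MeasurableSpace X] {μ : Measure X} {s : Set X}
    (hs : μ s < ∞) {F : X → ℝ} {E : ℝ} (hF : ∀ x ∈ s, |F x| ≤ E) :
    ∫ x in s, F x ^ 2 ∂μ ≤ E ^ 2 * μ.real s := by
  refine (Real.le_norm_self _).trans (norm_setIntegral_le_of_norm_le_const hs fun x hx => ?_)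
  rw [Real.norm_eq_abs, abs_pow]
  exact pow_le_pow_left₀ (abs_nonneg _) (hF x hx) 2

theorem summable_and_tsum_le_of_le_mul_shift {a K : ℕ → ℝ} {B : ℝ} {k : ℕ} (ha : ∀ m, 0 ≤ a m)
    (hK : Summable K) (hK0 : ∀ n, 0 ≤ K n) (hB : 0 ≤ B) (h : ∀ m, a m ≤ B * K (m + k)) :
    Summable a ∧ ∑' m, a m ≤ B * ∑' n, K n := by
  have hK_shift := ((summable_nat_add_iff k).2 hK).mul_left B
  have hsum := Summable.of_nonneg_of_le ha h hK_shift
  refine ⟨hsum, (hsum.tsum_le_tsum h hK_shift).trans ?_⟩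
  rw [tsum_mul_left]
  exact mul_le_mul_of_nonneg_left (tsum_comp_le_tsum_of_inj hK hK0 (add_left_injective k)) hB

section PerturbedCosine

open Real

theorem abs_inv_sqrt_sub_sqrt_two_div_pi_le {α κt N : ℝ} (hα : 0 < α) (hN : 0 < N)
    (hαn : 1 / α = 2 / π + κt / N) :
    |(√α)⁻¹ - √(2 / π)| ≤ √(π / 2) * |κt| / N := by
  have h2π : 0 < 2 / π := by positivity
  calc |(√α)⁻¹ - √(2 / π)| = |√(1 / α) - √(2 / π)| := by rw [one_div, sqrt_inv]
    _ ≤ |1 / α - 2 / π| / √(2 / π) := abs_sqrt_sub_sqrt_le (by positivity) h2π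
    _ = √(π / 2) * |κt| / N := by
      rw [hαn, add_sub_cancel_left, abs_div, abs_of_pos hN, div_eq_mul_inv _ √_, ← sqrt_inv,
        inv_div]
      ring

theorem abs_perturbed_cos_sub_cos_le {M α κt : ℝ} {κ : ℂ} {n : ℕ} (hα : 0 < α)
    (hαn : 1 / α = 2 / π + κt / ((n : ℝ) + 1)) (hκ : ‖κ‖ ≤ M) {t : ℝ} (ht : t ∈ Set.Icc 0 π) :
    |(√α)⁻¹ * (Complex.cos (((n : ℂ) + κ / ((n : ℂ) + 1)) * t)).re - √(2 / π) * cos (n * t)|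
      ≤ cosh (M * π) / (n + 1) * (√(π / 2) * |κt| + √(2 / π) * π * ‖κ‖) := by
  obtain ⟨ht0, htπ⟩ := ht
  have hN : (0 : ℝ) < n + 1 := by positivity
  set w : ℂ := κ / ((n : ℂ) + 1) * t
  have hsplit : ((n : ℂ) + κ / ((n : ℂ) + 1)) * t = ((n * t : ℝ) : ℂ) + w := by
    push_cast; ring
  have hw : ‖w‖ ≤ π * ‖κ‖ / (n + 1) := by
    have : ‖w‖ = ‖κ‖ / (n + 1) * t := by
      simp only [w, norm_mul, norm_div, Complex.norm_real, norm_of_nonneg ht0]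
      norm_cast
    rw [this, mul_comm, mul_div_assoc]
    gcongr
  have hwM : ‖w‖ ≤ M * π := by
    refine hw.trans ?_
    rw [mul_div_assoc, mul_comm]
    gcongr
    exact (div_le_self (norm_nonneg κ) (by linarith)).trans hκ
  have hcosh : ∀ {y : ℝ}, |y| ≤ ‖w‖ → cosh y ≤ cosh (M * π) := fun hy =>
    cosh_le_cosh.2 (hy.trans (hwM.trans (le_abs_self _)))
  set R := (Complex.cos (((n : ℂ) + κ / ((n : ℂ) + 1)) * t)).re
  have hR : |R| ≤ cosh (M * π) := by
    refine (Complex.abs_re_le_norm _).trans ((Complex.norm_cos_le_cosh_im_s14 _).trans (hcosh ?_))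
    simpa [hsplit] using Complex.abs_im_le_norm w
  have hRsub : |R - cos (n * t)| ≤ π * ‖κ‖ / (n + 1) * cosh (M * π) := by
    have h := Complex.norm_cos_add_sub_cos_le ((n * t : ℝ) : ℂ) w
    rw [Complex.ofReal_im, abs_zero, zero_add] at h
    have hre : R - cos (n * t)
        = (Complex.cos (((n * t : ℝ) : ℂ) + w) - Complex.cos ((n * t : ℝ) : ℂ)).re := by
      rw [Complex.sub_re, Complex.cos_ofReal_re, ← hsplit]
    rw [hre]
    exact (Complex.abs_re_le_norm _).trans
      (h.trans (mul_le_mul hw (hcosh (by rw [abs_norm])) (cosh_pos _).le (by positivity)))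
  have huv := abs_inv_sqrt_sub_sqrt_two_div_pi_le hα hN hαn
  calc |(√α)⁻¹ * R - √(2 / π) * cos (n * t)|
      = |((√α)⁻¹ - √(2 / π)) * R + √(2 / π) * (R - cos (n * t))| := by ring_nf
    _ ≤ |(√α)⁻¹ - √(2 / π)| * |R| + √(2 / π) * |R - cos (n * t)| := by
      refine (abs_add_le _ _).trans ?_
      rw [abs_mul, abs_mul, abs_of_nonneg (sqrt_nonneg _)]
    _ ≤ √(π / 2) * |κt| / (n + 1) * cosh (M * π)
        + √(2 / π) * (π * ‖κ‖ / (n + 1) * cosh (M * π)) := by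
      gcongr
    _ = _ := by ring

theorem setIntegral_sq_perturbed_cos_sub_cos_le {M α κt : ℝ} {κ : ℂ} {n : ℕ} (hα : 0 < α)
    (hαn : 1 / α = 2 / π + κt / ((n : ℝ) + 1)) (hκ : ‖κ‖ ≤ M) :
    ∫ t in Set.Icc 0 π,
        ((√α)⁻¹ * (Complex.cos (((n : ℂ) + κ / ((n : ℂ) + 1)) * t)).re - √(2 / π) * cos (n * t)) ^ 2
      ≤ (π * cosh (M * π)) ^ 2 / (n + 1) ^ 2 * (κt ^ 2 + 4 * ‖κ‖ ^ 2) := by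
  set x := √(π / 2) * |κt|
  set y := √(2 / π) * π * ‖κ‖
  have hx : x ^ 2 = π / 2 * κt ^ 2 := by rw [mul_pow, sq_sqrt (by positivity), sq_abs]
  have hy : y ^ 2 = 2 * π * ‖κ‖ ^ 2 := by
    rw [mul_pow, mul_pow, sq_sqrt (by positivity)]
    field_simp
  calc _ ≤ (cosh (M * π) / (n + 1) * (x + y)) ^ 2 * volume.real (Set.Icc 0 π) :=
        setIntegral_sq_le_of_abs_le (by simp) fun t ht => abs_perturbed_cos_sub_cos_le hα hαn hκ ht
    _ = cosh (M * π) ^ 2 / (n + 1) ^ 2 * (x + y) ^ 2 * π := by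
      rw [Real.volume_real_Icc_of_le pi_pos.le, mul_pow, div_pow]
      ring
    _ ≤ cosh (M * π) ^ 2 / (n + 1) ^ 2 * (2 * x ^ 2 + 2 * y ^ 2) * π := by
      gcongr
      nlinarith [sq_nonneg (x - y)]
    _ = _ := by
      rw [hx, hy]
      ring

end PerturbedCosine

theorem stmt14_general (M : ℝ) (hM : 0 < M)
    (α : ℕ → ℝ) (hα : ∀ n, 0 < α n)
    (ρ κ : ℕ → ℂ) (κt : ℕ → ℝ)
    (hρ : ∀ n : ℕ, ρ n = (n : ℂ) + κ n / ((n : ℂ) + 1))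
    (hαn : ∀ n : ℕ, 1 / α n = 2 / Real.pi + κt n / ((n : ℝ) + 1))
    (hκsum : Summable fun n => ‖κ n‖ ^ 2) (hκM : ∑' n, ‖κ n‖ ^ 2 ≤ M ^ 2)
    (hκtsum : Summable fun n => (κt n) ^ 2) (hκtM : ∑' n, (κt n) ^ 2 ≤ M ^ 2)
    -- the orthonormal cosine basis of `L²([0,π])`:
    (f : ℕ → ℝ → ℝ)
    (hf : ∀ n : ℕ, 1 ≤ n → ∀ t, f n t = Real.sqrt (2 / Real.pi) * Real.cos (n * t))
    -- the perturbed family `g_n(t) = α_n^{−1/2} cos(ρ_n t)` (real-valued):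
    (g : ℕ → ℝ → ℝ)
    (hg : ∀ n t, g n t = (Real.sqrt (α n))⁻¹ * (Complex.cos (ρ n * (t : ℂ))).re)
    (CΩ : ℝ)
    (hCΩ : CΩ = M * Real.pi * Real.cosh (M * Real.pi) *
      Real.sqrt ((3 / 2) * (1 + (2 * Real.pi) ^ 2 * M ^ 2 + (2 + Real.pi * M) ^ 2))) :
    ∀ J : ℕ, 1 ≤ J →
      (Summable fun n : ℕ =>
        ∫ t in Set.Icc (0 : ℝ) Real.pi, (g (n + (J + 1)) t - f (n + (J + 1)) t) ^ 2) ∧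
      Real.sqrt (∑' n : ℕ,
          ∫ t in Set.Icc (0 : ℝ) Real.pi, (g (n + (J + 1)) t - f (n + (J + 1)) t) ^ 2) ≤
        CΩ / J := by
  intro J hJ
  have hκ_le : ∀ n, ‖κ n‖ ≤ M := fun n =>
    (pow_le_pow_iff_left₀ (norm_nonneg _) hM.le two_ne_zero).1
      ((hκsum.le_tsum n fun m _ => sq_nonneg _).trans hκM)
  set K : ℕ → ℝ := fun n => κt n ^ 2 + 4 * ‖κ n‖ ^ 2
  have hK : Summable K := hκtsum.add (hκsum.mul_left 4)
  have hK_le : ∑' n, K n ≤ 5 * M ^ 2 := by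
    rw [hκtsum.tsum_add (hκsum.mul_left 4), tsum_mul_left]
    linarith
  set B := (Real.pi * Real.cosh (M * Real.pi)) ^ 2 / (J : ℝ) ^ 2
  have hterm : ∀ m, ∫ t in Set.Icc (0 : ℝ) Real.pi, (g (m + (J + 1)) t - f (m + (J + 1)) t) ^ 2
      ≤ B * K (m + (J + 1)) := by
    intro m
    set N := m + (J + 1)
    have hgf : (fun t => (g N t - f N t) ^ 2) = fun t : ℝ => ((Real.sqrt (α N))⁻¹ *
        (Complex.cos (((N : ℂ) + κ N / ((N : ℂ) + 1)) * t)).re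
          - Real.sqrt (2 / Real.pi) * Real.cos (N * t)) ^ 2 := by
      funext t
      rw [hg, hf N (by omega), hρ]
    rw [hgf]
    refine (setIntegral_sq_perturbed_cos_sub_cos_le (hα N) (hαn N) (hκ_le N)).trans ?_
    have hJN : (J : ℝ) ≤ N + 1 := by norm_cast; omega
    unfold B
    gcongr
  obtain ⟨hsum, htsum⟩ := summable_and_tsum_le_of_le_mul_shift
    (fun m => integral_nonneg fun t => sq_nonneg _) hK (fun n => by positivity) (by positivity) hterm
  refine ⟨hsum, ?_⟩
  have hX : 5 ≤ 3 / 2 * (1 + (2 * Real.pi) ^ 2 * M ^ 2 + (2 + Real.pi * M) ^ 2) := by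
    nlinarith [mul_pos Real.pi_pos hM]
  rw [Real.sqrt_le_left (by rw [hCΩ]; positivity)]
  calc _ ≤ B * (5 * M ^ 2) := htsum.trans (by gcongr)
    _ = (M * Real.pi * Real.cosh (M * Real.pi)) ^ 2 * 5 / J ^ 2 := by unfold B; ring
    _ ≤ (M * Real.pi * Real.cosh (M * Real.pi)) ^ 2
          * (3 / 2 * (1 + (2 * Real.pi) ^ 2 * M ^ 2 + (2 + Real.pi * M) ^ 2)) / J ^ 2 := by
      gcongr
    _ = (CΩ / J) ^ 2 := by rw [hCΩ, div_pow, mul_pow _ √_, Real.sq_sqrt (by positivity)]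

/-- For spectral data in the class `Ω_{0,M}`, the tails of the `ℓ²`-distance
between the perturbed cosine family `g_n(t) = α_n^{−1/2} cos(ρ_n t)` and the
orthonormal cosine basis `f_n` satisfy `Ω_J ≤ C_Ω/J` with
`C_Ω = Mπ cosh(Mπ) √((3/2)(1 + (2π)²M² + (2+πM)²))`. -/
theorem stmt14 (M : ℝ) (hM : 0 < M)
    (lam α : ℕ → ℝ) (hα : ∀ n, 0 < α n)
    (ρ κ : ℕ → ℂ) (κt : ℕ → ℝ)
    (hρsq : ∀ n, (ρ n) ^ 2 = ((lam n : ℝ) : ℂ))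
    (hρre : ∀ n, 0 ≤ (ρ n).re)
    (hρ : ∀ n : ℕ, ρ n = (n : ℂ) + κ n / ((n : ℂ) + 1))
    (hαn : ∀ n : ℕ, 1 / α n = 2 / Real.pi + κt n / ((n : ℝ) + 1))
    (hκsum : Summable fun n => ‖κ n‖ ^ 2) (hκM : ∑' n, ‖κ n‖ ^ 2 ≤ M ^ 2)
    (hκtsum : Summable fun n => (κt n) ^ 2) (hκtM : ∑' n, (κt n) ^ 2 ≤ M ^ 2)
    -- the orthonormal cosine basis of `L²([0,π])`:
    (f : ℕ → ℝ → ℝ)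
    (hf0 : ∀ t, f 0 t = (Real.sqrt Real.pi)⁻¹)
    (hf : ∀ n : ℕ, 1 ≤ n → ∀ t, f n t = Real.sqrt (2 / Real.pi) * Real.cos (n * t))
    -- the perturbed family `g_n(t) = α_n^{−1/2} cos(ρ_n t)` (real-valued):
    (g : ℕ → ℝ → ℝ)
    (hg : ∀ n t, g n t = (Real.sqrt (α n))⁻¹ * (Complex.cos (ρ n * (t : ℂ))).re)
    (CΩ : ℝ)
    (hCΩ : CΩ = M * Real.pi * Real.cosh (M * Real.pi) *
      Real.sqrt ((3 / 2) * (1 + (2 * Real.pi) ^ 2 * M ^ 2 + (2 + Real.pi * M) ^ 2))) :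
    ∀ J : ℕ, 1 ≤ J →
      (Summable fun n : ℕ =>
        ∫ t in Set.Icc (0 : ℝ) Real.pi, (g (n + (J + 1)) t - f (n + (J + 1)) t) ^ 2) ∧
      Real.sqrt (∑' n : ℕ,
          ∫ t in Set.Icc (0 : ℝ) Real.pi, (g (n + (J + 1)) t - f (n + (J + 1)) t) ^ 2) ≤
        CΩ / J :=
  stmt14_general M hM α hα ρ κ κt hρ hαn hκsum hκM hκtsum hκtM f hf g hg CΩ hCΩ
end

section
/- Let x ∈ (0,π], let (g_n)_{n∈ℕ₀} ⊂ L²([0,π]) and C > 0 be such that ‖v‖²_{L²([0,π])} ≤ C · Σ_{n=0}^∞ |⟨v, g_n⟩_{L²([0,π])}|² for every v ∈ L²([0,π]). Let κ_x be an integral operator on L²([0,x]) with bounded measurable kernel, and assume the Parseval-type identity Σ_{n=0}^∞ |⟨u, g_n⟩_{L²([0,x])}|² = ⟨u − κ_x u, u⟩_{L²([0,x])} holds for every u ∈ L²([0,x]). Then ‖u‖_{L²([0,x])} ≤ C · ‖u − κ_x u‖_{L²([0,x])} for every u ∈ L²([0,x]); in particular, if Id − κ_x is invertible on L²([0,x]),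 then ‖(Id−κ_x)^{−1}‖_{L²→L²} ≤ C. -/
/-! Extend `u ∈ L²([0,x])` by zero to `[0,π]`: the frame bound gives
`‖u‖² ≤ C ∑ₙ ⟨u,gₙ⟩²`, and the Parseval-type identity turns the right-hand side into
`C ⟨u − κ_x u, u⟩ ≤ C ‖u − κ_x u‖ ‖u‖` by Cauchy–Schwarz. Dividing by `‖u‖` gives the claim. -/

open MeasureTheory

section

variable {α β : Type*} [MeasurableSpace α] [MeasurableSpace β] {μ : Measure α} {ν : Measure β}

theorem integral_mul_le_sqrt_integral_sq_mul_sqrt_integral_sq {f g : α → ℝ}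
    (hf : MemLp f 2 μ) (hg : MemLp g 2 μ) :
    ∫ a, f a * g a ∂μ ≤ √(∫ a, f a ^ 2 ∂μ) * √(∫ a, g a ^ 2 ∂μ) := by
  have hfg : Integrable (fun a => f a * g a) μ := hf.integrable_mul hg
  have hnorm_rpow : ∀ h : α → ℝ, ∫ a, ‖h a‖ ^ (2 : ℝ) ∂μ = ∫ a, h a ^ 2 ∂μ := fun h => by
    simp only [Real.rpow_two, Real.norm_eq_abs, sq_abs]
  calc ∫ a, f a * g a ∂μ ≤ ∫ a, ‖f a‖ * ‖g a‖ ∂μ := by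
        simp_rw [← norm_mul]
        exact integral_mono hfg hfg.norm fun a => Real.le_norm_self _
    _ ≤ (∫ a, ‖f a‖ ^ (2 : ℝ) ∂μ) ^ (1 / 2 : ℝ) * (∫ a, ‖g a‖ ^ (2 : ℝ) ∂μ) ^ (1 / 2 : ℝ) :=
        integral_mul_norm_le_Lp_mul_Lq Real.HolderConjugate.two_two (by simpa using hf)
          (by simpa using hg)
    _ = √(∫ a, f a ^ 2 ∂μ) * √(∫ a, g a ^ 2 ∂μ) := by
        rw [hnorm_rpow, hnorm_rpow, Real.sqrt_eq_rpow, Real.sqrt_eq_rpow]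

theorem memLp_integral_kernel_mul [IsFiniteMeasure μ] [SFinite ν] {k : α → β → ℝ}
    (hk : Measurable (Function.uncurry k)) {Ck : ℝ} (hk_bdd : ∀ t s, |k t s| ≤ Ck)
    {u : β → ℝ} (hu : Integrable u ν) (p : ENNReal) :
    MemLp (fun t => ∫ s, k t s * u s ∂ν) p μ := by
  refine MemLp.of_bound ?_ (Ck * ∫ s, |u s| ∂ν) (ae_of_all _ fun t => ?_)
  · exact (hk.aestronglyMeasurable.mul hu.aestronglyMeasurable.comp_snd).integral_prod_right'
  · rw [← integral_const_mul]
    refine norm_integral_le_of_norm_le (hu.abs.const_mul Ck) (ae_of_all _ fun s => ?_)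
    rw [norm_mul, Real.norm_eq_abs, Real.norm_eq_abs]
    exact mul_le_mul_of_nonneg_right (hk_bdd t s) (abs_nonneg _)

def HasLowerFrameBound (μ : Measure α) (g : ℕ → α → ℝ) (C : ℝ) : Prop :=
  ∀ v : α → ℝ, MemLp v 2 μ → ∫ a, v a ^ 2 ∂μ ≤ C * ∑' n, (∫ a, v a * g n a ∂μ) ^ 2

/-- Zero extension from `s` to `S` preserves both sides of the frame inequality. -/
theorem HasLowerFrameBound.restrict_of_subset {S s : Set α} {g : ℕ → α → ℝ} {C : ℝ}
    (h : HasLowerFrameBound (μ.restrict S) g C) (hs : MeasurableSet s) (hsS : s ⊆ S) :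
    HasLowerFrameBound (μ.restrict s) g C := by
  intro u hu
  have hext : ∀ f : α → ℝ, ∫ a in S, s.indicator f a ∂μ = ∫ a in s, f a ∂μ := fun f => by
    rw [setIntegral_indicator hs, Set.inter_eq_self_of_subset_right hsS]
  have hsq : ∀ a, s.indicator u a ^ 2 = s.indicator (fun a => u a ^ 2) a := fun a => by
    by_cases ha : a ∈ s <;> simp [ha]
  have hv : MemLp (s.indicator u) 2 (μ.restrict S) := by
    rwa [memLp_indicator_iff_restrict hs, Measure.restrict_restrict hs,
      Set.inter_eq_self_of_subset_left hsS]
  have := h _ hv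
  simp_rw [hsq, ← Set.indicator_mul_left, hext] at this
  exact this

end

theorem le_of_sq_le_mul_self {a c : ℝ} (ha : 0 ≤ a) (hc : 0 ≤ c) (h : a ^ 2 ≤ c * a) : a ≤ c := by
  rcases ha.eq_or_lt with rfl | ha
  · exact hc
  · exact le_of_mul_le_mul_right (by rwa [← sq]) ha

theorem stmt17_general (x : ℝ) (hx : x ∈ Set.Ioc (0 : ℝ) Real.pi)
    (g : ℕ → ℝ → ℝ)
    (C : ℝ) (hC : 0 < C)
    -- lower frame bound on `L²([0,π])`:
    (hframe : ∀ v : ℝ → ℝ, MemLp v 2 (volume.restrict (Set.Icc (0 : ℝ) Real.pi)) →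
      (∫ t in Set.Icc (0 : ℝ) Real.pi, (v t) ^ 2) ≤
        C * ∑' n : ℕ, (∫ t in Set.Icc (0 : ℝ) Real.pi, v t * g n t) ^ 2)
    (k : ℝ → ℝ → ℝ) (hkmeas : Measurable (Function.uncurry k))
    (Ck : ℝ) (hkbdd : ∀ t s : ℝ, |k t s| ≤ Ck)
    -- Parseval-type identity on `L²([0,x])`:
    (hparseval : ∀ u : ℝ → ℝ, MemLp u 2 (volume.restrict (Set.Icc (0 : ℝ) x)) →
      ∑' n : ℕ, (∫ t in Set.Icc (0 : ℝ) x, u t * g n t) ^ 2 =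
        ∫ t in Set.Icc (0 : ℝ) x,
          (u t - ∫ s in Set.Icc (0 : ℝ) x, k t s * u s) * u t) :
    ∀ u : ℝ → ℝ, MemLp u 2 (volume.restrict (Set.Icc (0 : ℝ) x)) →
      Real.sqrt (∫ t in Set.Icc (0 : ℝ) x, (u t) ^ 2) ≤
        C * Real.sqrt (∫ t in Set.Icc (0 : ℝ) x,
          (u t - ∫ s in Set.Icc (0 : ℝ) x, k t s * u s) ^ 2) := by
  intro u hu
  have hframe_x : HasLowerFrameBound (volume.restrict (Set.Icc 0 x)) g C :=
    HasLowerFrameBound.restrict_of_subset hframe measurableSet_Icc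
      (Set.Icc_subset_Icc le_rfl hx.2)
  have hw : MemLp (fun t => u t - ∫ s in Set.Icc 0 x, k t s * u s) 2
      (volume.restrict (Set.Icc 0 x)) :=
    hu.sub (memLp_integral_kernel_mul hkmeas hkbdd (hu.integrable one_le_two) 2)
  refine le_of_sq_le_mul_self (Real.sqrt_nonneg _) (by positivity) ?_
  rw [Real.sq_sqrt (integral_nonneg fun t => sq_nonneg _), mul_assoc]
  calc ∫ t in Set.Icc 0 x, u t ^ 2
      ≤ C * ∑' n, (∫ t in Set.Icc 0 x, u t * g n t) ^ 2 := hframe_x u hu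
    _ = C * ∫ t in Set.Icc 0 x, (u t - ∫ s in Set.Icc 0 x, k t s * u s) * u t := by
        rw [hparseval u hu]
    _ ≤ _ := by
        gcongr
        exact integral_mul_le_sqrt_integral_sq_mul_sqrt_integral_sq hw hu

/-- `L²` resolvent bound from a lower frame bound plus the Parseval-type
identity of Gel'fand–Levitan theory: if `‖v‖² ≤ C ∑ₙ |⟨v,gₙ⟩|²` on `L²([0,π])`
and `∑ₙ |⟨u,gₙ⟩_{L²([0,x])}|² = ⟨u − κ_x u, u⟩` on `L²([0,x])`, then
`‖u‖ ≤ C ‖u − κ_x u‖` for all `u ∈ L²([0,x])`. -/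
theorem stmt17 (x : ℝ) (hx : x ∈ Set.Ioc (0 : ℝ) Real.pi)
    (g : ℕ → ℝ → ℝ) (hgL2 : ∀ n, MemLp (g n) 2 (volume.restrict (Set.Icc (0 : ℝ) Real.pi)))
    (C : ℝ) (hC : 0 < C)
    -- lower frame bound on `L²([0,π])`:
    (hframe : ∀ v : ℝ → ℝ, MemLp v 2 (volume.restrict (Set.Icc (0 : ℝ) Real.pi)) →
      (∫ t in Set.Icc (0 : ℝ) Real.pi, (v t) ^ 2) ≤
        C * ∑' n : ℕ, (∫ t in Set.Icc (0 : ℝ) Real.pi, v t * g n t) ^ 2)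
    (k : ℝ → ℝ → ℝ) (hkmeas : Measurable (Function.uncurry k))
    (Ck : ℝ) (hkbdd : ∀ t s : ℝ, |k t s| ≤ Ck)
    -- Parseval-type identity on `L²([0,x])`:
    (hparseval : ∀ u : ℝ → ℝ, MemLp u 2 (volume.restrict (Set.Icc (0 : ℝ) x)) →
      ∑' n : ℕ, (∫ t in Set.Icc (0 : ℝ) x, u t * g n t) ^ 2 =
        ∫ t in Set.Icc (0 : ℝ) x,
          (u t - ∫ s in Set.Icc (0 : ℝ) x, k t s * u s) * u t) :
    ∀ u : ℝ → ℝ, MemLp u 2 (volume.restrict (Set.Icc (0 : ℝ) x)) →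
      Real.sqrt (∫ t in Set.Icc (0 : ℝ) x, (u t) ^ 2) ≤
        C * Real.sqrt (∫ t in Set.Icc (0 : ℝ) x,
          (u t - ∫ s in Set.Icc (0 : ℝ) x, k t s * u s) ^ 2) :=
  stmt17_general x hx g C hC hframe k hkmeas Ck hkbdd hparseval
end

section
/- Let x ∈ (0,π], let k ∈ L^∞([0,π]²;ℝ), and suppose Id − κ_x is invertible on L²([0,x]) with ‖(Id−κ_x)^{−1}‖_{L²→L²} ≤ C. Then for every f ∈ L^∞([0,x]), the unique L²-solution u of u − κ_x u = f belongs to L^∞([0,x]) and satisfies ‖u‖_{L^∞([0,x])} ≤ ( π^{1/2} + π‖k‖_{L^∞} C ) · ‖f‖_{L^∞([0,x])}. In particular, ‖(Id−κ_x)^{−1}‖_{L^∞([0,x])→L^∞([0,x])} ≤ π^{1/2} + π‖k‖_{L^∞} C. -/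
/-! Rewriting the equation as `u = f + κ_x u` gives `|u t| ≤ |f t| + ‖k‖_∞ ‖u‖_{L¹}` for a.e. `t`.
Hölder's inequality on the finite interval, used twice around the `L²` resolvent bound, gives
`‖u‖_{L¹} ≤ x^{1/2} ‖u‖_{L²} ≤ C x^{1/2} ‖f‖_{L²} ≤ C x ‖f‖_∞`.
Finally `x ≤ π` and `1 ≤ π^{1/2}`. -/

open MeasureTheory
open scoped ENNReal

variable {α : Type*} [MeasurableSpace α] {μ : Measure α}

theorem enorm_integral_mul_le_of_abs_le {k g : α → ℝ} {c : ℝ} (hk : ∀ᵐ s ∂μ, |k s| ≤ c) :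
    ‖∫ s, k s * g s ∂μ‖ₑ ≤ ENNReal.ofReal c * eLpNorm g 1 μ :=
  calc ‖∫ s, k s * g s ∂μ‖ₑ ≤ ∫⁻ s, ‖k s * g s‖ₑ ∂μ := enorm_integral_le_lintegral_enorm _
    _ ≤ ∫⁻ s, ENNReal.ofReal c * ‖g s‖ₑ ∂μ := lintegral_mono_ae <| hk.mono fun s hs => by
        rw [enorm_mul, Real.enorm_eq_ofReal_abs (k s)]
        gcongr
    _ = ENNReal.ofReal c * eLpNorm g 1 μ := by
        rw [lintegral_const_mul' _ _ ENNReal.ofReal_ne_top, eLpNorm_one_eq_lintegral_enorm]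

theorem eLpNorm_top_le_of_sub_integral_eq {k : α → α → ℝ} {c : ℝ}
    (hk : ∀ᵐ t ∂μ, ∀ᵐ s ∂μ, |k t s| ≤ c) {f u : α → ℝ}
    (heq : ∀ᵐ t ∂μ, u t - ∫ s, k t s * u s ∂μ = f t) :
    eLpNorm u ⊤ μ ≤ eLpNorm f ⊤ μ + ENNReal.ofReal c * eLpNorm u 1 μ := by
  have hu : u =ᵐ[μ] f + fun t => ∫ s, k t s * u s ∂μ :=
    heq.mono fun t ht => by simp only [Pi.add_apply, ← ht, sub_add_cancel]
  rw [eLpNorm_congr_ae hu, eLpNorm_exponent_top, eLpNorm_exponent_top]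
  refine eLpNormEssSup_add_le.trans (add_le_add_right ?_ _)
  exact essSup_le_of_ae_le _ (hk.mono fun t ht => enorm_integral_mul_le_of_abs_le ht)

theorem eLpNorm_one_le_mul_measure_univ_mul_eLpNorm_top {f u : α → ℝ}
    (hu : AEStronglyMeasurable u μ) (hf : AEStronglyMeasurable f μ) {a : ℝ≥0∞}
    (h : eLpNorm u 2 μ ≤ a * eLpNorm f 2 μ) :
    eLpNorm u 1 μ ≤ a * μ Set.univ * eLpNorm f ⊤ μ := by
  set r := μ Set.univ ^ (1 / 2 : ℝ)
  have hu12 : eLpNorm u 1 μ ≤ eLpNorm u 2 μ * r := by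
    have h := eLpNorm_le_eLpNorm_mul_rpow_measure_univ (p := 1) (q := 2) one_le_two hu
    norm_num at h ⊢
    exact h
  have hf2top : eLpNorm f 2 μ ≤ eLpNorm f ⊤ μ * r := by
    simpa [r] using eLpNorm_le_eLpNorm_mul_rpow_measure_univ (p := 2) (q := ⊤) le_top hf
  have hr : r * r = μ Set.univ := by
    rw [← ENNReal.rpow_add_of_nonneg _ _ (by norm_num) (by norm_num)]
    norm_num
  calc eLpNorm u 1 μ ≤ a * (eLpNorm f ⊤ μ * r) * r :=
        hu12.trans (mul_le_mul_left (h.trans (mul_le_mul_right hf2top a)) r)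
    _ = a * μ Set.univ * eLpNorm f ⊤ μ := by rw [← hr]; ring

theorem memLp_top_and_eLpNorm_top_le_of_sub_integral_eq [IsFiniteMeasure μ]
    {k : α → α → ℝ} {c : ℝ} (hk : ∀ᵐ t ∂μ, ∀ᵐ s ∂μ, |k t s| ≤ c) {C : ℝ} {f u : α → ℝ}
    (hf : MemLp f ⊤ μ) (hu : AEStronglyMeasurable u μ)
    (hbound : eLpNorm u 2 μ ≤ ENNReal.ofReal C * eLpNorm f 2 μ)
    (heq : ∀ᵐ t ∂μ, u t - ∫ s, k t s * u s ∂μ = f t) :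
    MemLp u ⊤ μ ∧
      eLpNorm u ⊤ μ ≤ (1 + ENNReal.ofReal c * ENNReal.ofReal C * μ Set.univ) * eLpNorm f ⊤ μ := by
  have hle :
      eLpNorm u ⊤ μ ≤ (1 + ENNReal.ofReal c * ENNReal.ofReal C * μ Set.univ) * eLpNorm f ⊤ μ :=
    calc eLpNorm u ⊤ μ ≤ eLpNorm f ⊤ μ + ENNReal.ofReal c * eLpNorm u 1 μ :=
          eLpNorm_top_le_of_sub_integral_eq hk heq
      _ ≤ eLpNorm f ⊤ μ +
            ENNReal.ofReal c * (ENNReal.ofReal C * μ Set.univ * eLpNorm f ⊤ μ) := by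
          gcongr
          exact eLpNorm_one_le_mul_measure_univ_mul_eLpNorm_top hu hf.1 hbound
      _ = (1 + ENNReal.ofReal c * ENNReal.ofReal C * μ Set.univ) * eLpNorm f ⊤ μ := by ring
  refine ⟨⟨hu, hle.trans_lt (ENNReal.mul_lt_top ?_ hf.2)⟩, hle⟩
  finiteness

theorem stmt18_general (x : ℝ) (hx : x ∈ Set.Ioc (0 : ℝ) Real.pi)
    (k : ℝ → ℝ → ℝ)
    (Ck : ℝ) (hCk : 0 ≤ Ck) (hkbdd : ∀ t s : ℝ, |k t s| ≤ Ck)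
    (C : ℝ) (hC : 0 ≤ C)
    -- ... with `‖(Id−κ_x)⁻¹‖_{L²→L²} ≤ C`:
    (hbound : ∀ v : ℝ → ℝ, MemLp v 2 (volume.restrict (Set.Icc (0 : ℝ) x)) →
      eLpNorm v 2 (volume.restrict (Set.Icc (0 : ℝ) x)) ≤
        ENNReal.ofReal C *
          eLpNorm (fun t => v t - ∫ s in Set.Icc (0 : ℝ) x, k t s * v s) 2
            (volume.restrict (Set.Icc (0 : ℝ) x)))
    (f u : ℝ → ℝ)
    (hf : MemLp f ⊤ (volume.restrict (Set.Icc (0 : ℝ) x)))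
    (hu : MemLp u 2 (volume.restrict (Set.Icc (0 : ℝ) x)))
    (heq : ∀ᵐ t ∂(volume.restrict (Set.Icc (0 : ℝ) x)),
      u t - ∫ s in Set.Icc (0 : ℝ) x, k t s * u s = f t) :
    MemLp u ⊤ (volume.restrict (Set.Icc (0 : ℝ) x)) ∧
      eLpNorm u ⊤ (volume.restrict (Set.Icc (0 : ℝ) x)) ≤
        ENNReal.ofReal (Real.sqrt Real.pi + Real.pi * Ck * C) *
          eLpNorm f ⊤ (volume.restrict (Set.Icc (0 : ℝ) x)) := by
  have hbound_u := eLpNorm_congr_ae heq ▸ hbound u hu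
  obtain ⟨hmem, hle⟩ := memLp_top_and_eLpNorm_top_le_of_sub_integral_eq
    (ae_of_all _ fun t => ae_of_all _ (hkbdd t)) hf hu.1 hbound_u heq
  refine ⟨hmem, hle.trans (mul_le_mul_left ?_ _)⟩
  have hone : (1 : ℝ≥0∞) ≤ ENNReal.ofReal (Real.sqrt Real.pi) :=
    ENNReal.one_le_ofReal.2 (Real.one_le_sqrt.2 (by linarith [Real.pi_gt_three]))
  have hvol : ENNReal.ofReal Ck * ENNReal.ofReal C * volume (Set.Icc 0 x) ≤
      ENNReal.ofReal (Real.pi * Ck * C) := by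
    rw [Real.volume_Icc, sub_zero, ← ENNReal.ofReal_mul hCk, ← ENNReal.ofReal_mul (by positivity)]
    exact ENNReal.ofReal_le_ofReal (by nlinarith [mul_nonneg hCk hC, hx.2])
  rw [ENNReal.ofReal_add (Real.sqrt_nonneg _) (by positivity), Measure.restrict_apply_univ]
  exact add_le_add hone hvol

/-- `L^∞` bound for solutions of the Fredholm equation: if `|k| ≤ Ck`,
`Id − κ_x` is invertible on `L²([0,x])` with `‖(Id−κ_x)⁻¹‖_{L²→L²} ≤ C`, and
`u − κ_x u = f` with `f ∈ L^∞([0,x])`, then `u ∈ L^∞([0,x])` and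
`‖u‖_∞ ≤ (π^{1/2} + π‖k‖_∞ C)‖f‖_∞`. -/
theorem stmt18 (x : ℝ) (hx : x ∈ Set.Ioc (0 : ℝ) Real.pi)
    (k : ℝ → ℝ → ℝ) (hkmeas : Measurable (Function.uncurry k))
    (Ck : ℝ) (hCk : 0 ≤ Ck) (hkbdd : ∀ t s : ℝ, |k t s| ≤ Ck)
    (C : ℝ) (hC : 0 ≤ C)
    -- `Id − κ_x` is invertible on `L²([0,x])` ...
    (hsolve : ∀ h : ℝ → ℝ, MemLp h 2 (volume.restrict (Set.Icc (0 : ℝ) x)) →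
      ∃ v : ℝ → ℝ, MemLp v 2 (volume.restrict (Set.Icc (0 : ℝ) x)) ∧
        ∀ᵐ t ∂(volume.restrict (Set.Icc (0 : ℝ) x)),
          v t - ∫ s in Set.Icc (0 : ℝ) x, k t s * v s = h t)
    -- ... with `‖(Id−κ_x)⁻¹‖_{L²→L²} ≤ C`:
    (hbound : ∀ v : ℝ → ℝ, MemLp v 2 (volume.restrict (Set.Icc (0 : ℝ) x)) →
      eLpNorm v 2 (volume.restrict (Set.Icc (0 : ℝ) x)) ≤
        ENNReal.ofReal C *
          eLpNorm (fun t => v t - ∫ s in Set.Icc (0 : ℝ) x, k t s * v s) 2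
            (volume.restrict (Set.Icc (0 : ℝ) x)))
    (f u : ℝ → ℝ)
    (hf : MemLp f ⊤ (volume.restrict (Set.Icc (0 : ℝ) x)))
    (hu : MemLp u 2 (volume.restrict (Set.Icc (0 : ℝ) x)))
    (heq : ∀ᵐ t ∂(volume.restrict (Set.Icc (0 : ℝ) x)),
      u t - ∫ s in Set.Icc (0 : ℝ) x, k t s * u s = f t) :
    MemLp u ⊤ (volume.restrict (Set.Icc (0 : ℝ) x)) ∧
      eLpNorm u ⊤ (volume.restrict (Set.Icc (0 : ℝ) x)) ≤
        ENNReal.ofReal (Real.sqrt Real.pi + Real.pi * Ck * C) *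
          eLpNorm f ⊤ (volume.restrict (Set.Icc (0 : ℝ) x)) :=
  stmt18_general x hx k Ck hCk hkbdd C hC hbound f u hf hu heq
end
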